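/- arXiv:2604.24049 — 9 statements merged into one kernel-verified Lean document; each statement's English description precedes it below -/
import Mathlib

section
/- Under Assumptions 1, 2, 3(i), 4 and 5, the quantity E[Y1(0,M(0)) − Y0(0) | G=1] is identified from the observed data: E[Y1(0,M(0)) − Y0(0) | G=1] = E[ν(0,X) | G=1] = τ(0,0), where ν(0,x) is a version of E[δ(0,M,X) | G=0, X=x]. -/
open MeasureTheory ProbabilityTheory
set_option linter.unusedSectionVars false

section Aux

variable {Ω : Type*} [mΩ : MeasurableSpace Ω] {P : Measure Ω}

lemma comap_comp_le' {γ δ : Type*} [MeasurableSpace γ] [MeasurableSpace δ]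
    {f : Ω → γ} (g : γ → δ) (hg : Measurable g) :
    MeasurableSpace.comap (fun ω => g (f ω)) inferInstance
      ≤ MeasurableSpace.comap f inferInstance := by
  rintro _ ⟨s, hs, rfl⟩
  exact ⟨g ⁻¹' s, hg hs, rfl⟩

lemma setIntegral_eq_indicator_mul (v : Ω → ℝ) {t : Set Ω} (ht : MeasurableSet t) :
    ∫ ω in t, v ω ∂P = ∫ ω, t.indicator (fun _ => (1:ℝ)) ω * v ω ∂P := by
  rw [← integral_indicator ht]
  refine integral_congr_ae (Filter.Eventually.of_forall fun ω => ?_)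
  by_cases h : ω ∈ t <;> simp [h]

omit mΩ in
lemma integral_mul_condexp {m : MeasurableSpace Ω} [mΩ : MeasurableSpace Ω] {P : Measure Ω} [IsFiniteMeasure P] (hm : m ≤ mΩ)
    {k f : Ω → ℝ} (hk : StronglyMeasurable[m] k) (hf : Integrable f P)
    (hkf : Integrable (fun ω => k ω * f ω) P) :
    ∫ ω, k ω * f ω ∂P = ∫ ω, k ω * (P[f|m]) ω ∂P := by
  have h1 : ∫ ω, k ω * f ω ∂P = ∫ ω, (P[fun ω => k ω * f ω|m]) ω ∂P :=
    (integral_condExp hm (f := fun ω => k ω * f ω)).symm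
  rw [h1]
  exact integral_congr_ae (condExp_mul_of_stronglyMeasurable_left hk hkf hf)

omit mΩ in
lemma setIntegral_eq_of_generateFrom {m : MeasurableSpace Ω} [mΩ : MeasurableSpace Ω] {P : Measure Ω} [IsFiniteMeasure P] (hm : m ≤ mΩ)
    {T : Set (Set Ω)} (hgen : m = MeasurableSpace.generateFrom T) (hpi : IsPiSystem T)
    {u v : Ω → ℝ} (hu : Integrable u P) (hv : Integrable v P)
    (htot : ∫ ω, u ω ∂P = ∫ ω, v ω ∂P)
    (hbasic : ∀ t ∈ T, ∫ ω in t, u ω ∂P = ∫ ω in t, v ω ∂P) :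
    ∀ ⦃s : Set Ω⦄, MeasurableSet[m] s → ∫ ω in s, u ω ∂P = ∫ ω in s, v ω ∂P := by
  refine MeasurableSpace.induction_on_inter (m := m) (s := T)
    (C := fun t _ => ∫ ω in t, u ω ∂P = ∫ ω in t, v ω ∂P) hgen hpi (by simp) (fun t ht => hbasic t ht) ?_ ?_
  · intro t htm hC
    have ht' : MeasurableSet[mΩ] t := hm _ htm
    have h1 := integral_add_compl (μ := P) ht' hu
    have h2 := integral_add_compl (μ := P) ht' hv
    linarith
  · intro g hdis hmeas hC
    have hgm : ∀ i, MeasurableSet[mΩ] (g i) := fun i => hm _ (hmeas i)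
    have h1 := integral_iUnion (μ := P) hgm hdis hu.integrableOn
    have h2 := integral_iUnion (μ := P) hgm hdis hv.integrableOn
    rw [h1, h2]
    exact tsum_congr hC

lemma comap_prod_eq_generateFrom {γ δ : Type*} [MeasurableSpace γ] [MeasurableSpace δ]
    (F : Ω → γ) (Y : Ω → δ) :
    MeasurableSpace.comap (fun ω => (F ω, Y ω)) inferInstance =
      MeasurableSpace.generateFrom
        {S : Set Ω | ∃ s t, MeasurableSet s ∧ MeasurableSet t ∧ S = F ⁻¹' s ∩ Y ⁻¹' t} := by
  conv_lhs => rw [show (inferInstance : MeasurableSpace (γ × δ)) = Prod.instMeasurableSpace from rfl,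
    ← generateFrom_prod]
  rw [MeasurableSpace.comap_generateFrom]
  congr 1
  ext S
  constructor
  · rintro ⟨_, ⟨s, hs, t, ht, rfl⟩, rfl⟩
    exact ⟨s, t, hs, ht, (Set.mk_preimage_prod (f := F) (g := Y)).symm⟩
  · rintro ⟨s, t, hs, ht, rfl⟩
    exact ⟨s ×ˢ t, Set.mem_image2_of_mem hs ht, Set.mk_preimage_prod (f := F) (g := Y)⟩

lemma isPiSystem_comap_prod {γ δ : Type*} [MeasurableSpace γ] [MeasurableSpace δ]
    (F : Ω → γ) (Y : Ω → δ) :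
    IsPiSystem {S : Set Ω | ∃ s t, MeasurableSet s ∧ MeasurableSet t ∧ S = F ⁻¹' s ∩ Y ⁻¹' t} := by
  rintro S1 ⟨s1, t1, hs1, ht1, rfl⟩ S2 ⟨s2, t2, hs2, ht2, rfl⟩ _
  refine ⟨s1 ∩ s2, t1 ∩ t2, hs1.inter hs2, ht1.inter ht2, ?_⟩
  ext ω
  simp only [Set.mem_inter_iff, Set.mem_preimage]
  tauto

end Aux


section Aux2
variable {Ω : Type*} [mΩ : MeasurableSpace Ω] {P : Measure Ω}

lemma abs_indicator_one_le (s : Set Ω) (ω : Ω) : |s.indicator (fun _ => (1:ℝ)) ω| ≤ 1 := by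
  by_cases h : ω ∈ s <;> simp [h]

omit mΩ in
lemma abs_condexp_indicator_one_le {m : MeasurableSpace Ω} [mΩ : MeasurableSpace Ω]
    {P : Measure Ω} [IsFiniteMeasure P] (s : Set Ω) :
    ∀ᵐ ω ∂P, |(P[s.indicator (fun _ => (1:ℝ))|m]) ω| ≤ 1 := by
  have h := ae_bdd_condExp_of_ae_bdd (μ := P) (m := m) (R := 1)
    (f := s.indicator (fun _ => (1:ℝ)))
    (Filter.Eventually.of_forall fun ω => by simpa using abs_indicator_one_le s ω)
  simpa using h

lemma MeasureTheory.Integrable.indicator_one_mul {s : Set Ω} (hs : MeasurableSet s) {f : Ω → ℝ}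
    (hf : Integrable f P) :
    Integrable (fun ω => s.indicator (fun _ => (1:ℝ)) ω * f ω) P := by
  refine hf.bdd_mul (c := 1) (measurable_const.indicator hs).aestronglyMeasurable ?_
  exact Filter.Eventually.of_forall fun ω => by
    rw [Real.norm_eq_abs]; exact abs_indicator_one_le s ω

omit mΩ in
lemma integral_bdd_mul_condexp {m : MeasurableSpace Ω} [mΩ : MeasurableSpace Ω]
    {P : Measure Ω} [IsFiniteMeasure P] (hm : m ≤ mΩ)
    {k f : Ω → ℝ} (hk : StronglyMeasurable[m] k) (hbdd : ∀ᵐ ω ∂P, |k ω| ≤ 1)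
    (hf : Integrable f P) :
    ∫ ω, k ω * f ω ∂P = ∫ ω, k ω * (P[f|m]) ω ∂P := by
  refine integral_mul_condexp hm hk hf ?_
  refine hf.bdd_mul (c := 1) (hk.mono hm).aestronglyMeasurable ?_
  filter_upwards [hbdd] with ω h using by rwa [Real.norm_eq_abs]

omit mΩ in
lemma integral_mul_condexp_bdd {m : MeasurableSpace Ω} [mΩ : MeasurableSpace Ω]
    {P : Measure Ω} [IsFiniteMeasure P] (hm : m ≤ mΩ)
    {k f : Ω → ℝ} (hk : StronglyMeasurable[m] k) (hk_int : Integrable k P)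
    (hf_sm : AEStronglyMeasurable f P) (hf_bdd : ∀ᵐ ω ∂P, |f ω| ≤ 1)
    (hf_int : Integrable f P) :
    ∫ ω, k ω * f ω ∂P = ∫ ω, k ω * (P[f|m]) ω ∂P := by
  refine integral_mul_condexp hm hk hf_int ?_
  have h1 : Integrable (fun ω => f ω * k ω) P := by
    refine hk_int.bdd_mul (c := 1) hf_sm ?_
    filter_upwards [hf_bdd] with ω h using by rwa [Real.norm_eq_abs]
  exact h1.congr (Filter.Eventually.of_forall fun ω => by ring)

lemma setIntegral_inter_eq {γ δ : Type*} [MeasurableSpace γ] [MeasurableSpace δ]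
    {F : Ω → γ} {Y : Ω → δ} (hF : Measurable F) (hY : Measurable Y)
    {s : Set γ} {t : Set δ} (hs : MeasurableSet s) (ht : MeasurableSet t) (w : Ω → ℝ) :
    ∫ ω in F ⁻¹' s ∩ Y ⁻¹' t, w ω ∂P =
      ∫ ω, ((Y ⁻¹' t).indicator (fun _ => (1:ℝ)) ω * w ω)
        * (F ⁻¹' s).indicator (fun _ => (1:ℝ)) ω ∂P := by
  rw [setIntegral_eq_indicator_mul w ((hF hs).inter (hY ht))]
  refine integral_congr_ae (Filter.Eventually.of_forall fun ω => ?_)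
  by_cases h1 : ω ∈ F ⁻¹' s <;> by_cases h2 : ω ∈ Y ⁻¹' t <;>
    simp [Set.indicator_apply, Set.mem_inter_iff, h1, h2]

lemma comap_le_of_factor {γ δ : Type*} [MeasurableSpace γ] [MeasurableSpace δ]
    {f : Ω → γ} {g : Ω → δ} (φ : δ → γ) (hφ : Measurable φ) (hfg : ∀ ω, f ω = φ (g ω)) :
    MeasurableSpace.comap f inferInstance ≤ MeasurableSpace.comap g inferInstance := by
  rintro _ ⟨s, hs, rfl⟩
  refine ⟨φ ⁻¹' s, hφ hs, ?_⟩
  ext ω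
  simp [hfg ω]

lemma comap_snd_le {γ δ : Type*} [MeasurableSpace γ] [MeasurableSpace δ] (F : Ω → γ) (Y : Ω → δ) :
    MeasurableSpace.comap Y inferInstance ≤
      MeasurableSpace.comap (fun ω => (F ω, Y ω)) inferInstance := by
  rintro _ ⟨s, hs, rfl⟩
  exact ⟨Prod.snd ⁻¹' s, measurable_snd hs, rfl⟩

end Aux2

section CI

variable {Ω α β 𝓧 : Type*} [mΩ : MeasurableSpace Ω] [StandardBorelSpace Ω] [Nonempty Ω]
  [MeasurableSpace α] [MeasurableSpace β] [MeasurableSpace 𝓧]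
  {P : Measure Ω} [IsProbabilityMeasure P]
  {A : Ω → α} {B : Ω → β} {X : Ω → 𝓧}

lemma condexp_indicator_comap_prod_of_condIndepFun
    (hA : Measurable A) (hB : Measurable B) (hX : Measurable X)
    (hInd : CondIndepFun (MeasurableSpace.comap X inferInstance) hX.comap_le A B P)
    {sA : Set α} (hsA : MeasurableSet sA) :
    P[(A ⁻¹' sA).indicator (fun _ => (1:ℝ)) |
        MeasurableSpace.comap (fun ω => (B ω, X ω)) inferInstance]
      =ᵐ[P] P[(A ⁻¹' sA).indicator (fun _ => (1:ℝ)) |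
        MeasurableSpace.comap X inferInstance] := by
  have hmX : MeasurableSpace.comap X inferInstance ≤ mΩ := hX.comap_le
  have hmBX : MeasurableSpace.comap (fun ω => (B ω, X ω)) inferInstance ≤ mΩ :=
    (hB.prodMk hX).comap_le
  have hXle : MeasurableSpace.comap X inferInstance ≤
      MeasurableSpace.comap (fun ω => (B ω, X ω)) inferInstance := comap_snd_le B X
  have hf_int : Integrable ((A ⁻¹' sA).indicator (fun _ => (1:ℝ))) P :=
    (integrable_const (1:ℝ)).indicator (hA hsA)
  have hIndC := (condIndepFun_iff_condExp_inter_preimage_eq_mul (μ := P) hA hB).mp hInd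
  refine (ae_eq_condExp_of_forall_setIntegral_eq hmBX hf_int
    (fun s _ _ => integrable_condExp.integrableOn) (fun s hs _ => ?_)
    (stronglyMeasurable_condExp.mono hXle).aestronglyMeasurable).symm
  refine setIntegral_eq_of_generateFrom hmBX (comap_prod_eq_generateFrom B X)
    (isPiSystem_comap_prod B X) integrable_condExp hf_int (integral_condExp hmX) ?_ hs
  rintro _ ⟨s1, t1, hs1, ht1, rfl⟩
  have hix_sm : StronglyMeasurable[MeasurableSpace.comap X inferInstance]
      ((X ⁻¹' t1).indicator (fun _ => (1:ℝ))) :=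
    stronglyMeasurable_const.indicator ⟨t1, ht1, rfl⟩
  have hva_bdd := abs_condexp_indicator_one_le
    (m := MeasurableSpace.comap X inferInstance) (P := P) (A ⁻¹' sA)
  have hk_sm : StronglyMeasurable[MeasurableSpace.comap X inferInstance]
      (fun ω => (X ⁻¹' t1).indicator (fun _ => (1:ℝ)) ω *
        (P[(A ⁻¹' sA).indicator (fun _ => (1:ℝ)) | MeasurableSpace.comap X inferInstance]) ω) :=
    hix_sm.mul stronglyMeasurable_condExp
  have hk_bdd : ∀ᵐ ω ∂P, |(X ⁻¹' t1).indicator (fun _ => (1:ℝ)) ω *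
      (P[(A ⁻¹' sA).indicator (fun _ => (1:ℝ)) | MeasurableSpace.comap X inferInstance]) ω| ≤ 1 := by
    filter_upwards [hva_bdd] with ω h
    rw [abs_mul]
    exact mul_le_one₀ (abs_indicator_one_le _ ω) (abs_nonneg _) h
  have hib_int : Integrable ((B ⁻¹' s1).indicator (fun _ => (1:ℝ))) P :=
    (integrable_const (1:ℝ)).indicator (hB hs1)
  have hiab_int : Integrable ((A ⁻¹' sA ∩ B ⁻¹' s1).indicator (fun _ => (1:ℝ))) P :=
    (integrable_const (1:ℝ)).indicator ((hA hsA).inter (hB hs1))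
  have hL : ∫ ω in B ⁻¹' s1 ∩ X ⁻¹' t1,
      (P[(A ⁻¹' sA).indicator (fun _ => (1:ℝ)) | MeasurableSpace.comap X inferInstance]) ω ∂P =
      ∫ ω, ((X ⁻¹' t1).indicator (fun _ => (1:ℝ)) ω *
        (P[(A ⁻¹' sA).indicator (fun _ => (1:ℝ)) | MeasurableSpace.comap X inferInstance]) ω) *
        (P[(B ⁻¹' s1).indicator (fun _ => (1:ℝ)) | MeasurableSpace.comap X inferInstance]) ω ∂P := by
    rw [setIntegral_inter_eq hB hX hs1 ht1]
    exact integral_bdd_mul_condexp hmX hk_sm hk_bdd hib_int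
  have hR : ∫ ω in B ⁻¹' s1 ∩ X ⁻¹' t1, (A ⁻¹' sA).indicator (fun _ => (1:ℝ)) ω ∂P =
      ∫ ω, ((X ⁻¹' t1).indicator (fun _ => (1:ℝ)) ω *
        (P[(A ⁻¹' sA).indicator (fun _ => (1:ℝ)) | MeasurableSpace.comap X inferInstance]) ω) *
        (P[(B ⁻¹' s1).indicator (fun _ => (1:ℝ)) | MeasurableSpace.comap X inferInstance]) ω ∂P := by
    rw [setIntegral_inter_eq hB hX hs1 ht1]
    have h1 : ∫ ω, ((X ⁻¹' t1).indicator (fun _ => (1:ℝ)) ω *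
        (A ⁻¹' sA).indicator (fun _ => (1:ℝ)) ω) * (B ⁻¹' s1).indicator (fun _ => (1:ℝ)) ω ∂P =
        ∫ ω, (X ⁻¹' t1).indicator (fun _ => (1:ℝ)) ω *
          (A ⁻¹' sA ∩ B ⁻¹' s1).indicator (fun _ => (1:ℝ)) ω ∂P := by
      refine integral_congr_ae (Filter.Eventually.of_forall fun ω => ?_)
      by_cases h1 : ω ∈ A ⁻¹' sA <;> by_cases h2 : ω ∈ B ⁻¹' s1 <;>
        simp [Set.indicator_apply, Set.mem_inter_iff, h1, h2]
    rw [h1, integral_bdd_mul_condexp hmX hix_sm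
      (Filter.Eventually.of_forall fun ω => abs_indicator_one_le _ ω) hiab_int]
    refine integral_congr_ae ?_
    filter_upwards [hIndC sA s1 hsA hs1] with ω hω
    rw [hω]; ring
  rw [hL, hR]

lemma condexp_comap_prod_of_condIndepFun
    (hA : Measurable A) (hB : Measurable B) (hX : Measurable X)
    (hInd : CondIndepFun (MeasurableSpace.comap X inferInstance) hX.comap_le A B P)
    {h : Ω → ℝ}
    (hh_sm : StronglyMeasurable[MeasurableSpace.comap (fun ω => (B ω, X ω)) inferInstance] h)
    (hh_int : Integrable h P) :
    P[h | MeasurableSpace.comap (fun ω => (A ω, X ω)) inferInstance]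
      =ᵐ[P] P[h | MeasurableSpace.comap X inferInstance] := by
  have hmX : MeasurableSpace.comap X inferInstance ≤ mΩ := hX.comap_le
  have hmBX : MeasurableSpace.comap (fun ω => (B ω, X ω)) inferInstance ≤ mΩ :=
    (hB.prodMk hX).comap_le
  have hmAX : MeasurableSpace.comap (fun ω => (A ω, X ω)) inferInstance ≤ mΩ :=
    (hA.prodMk hX).comap_le
  have hXleA : MeasurableSpace.comap X inferInstance ≤
      MeasurableSpace.comap (fun ω => (A ω, X ω)) inferInstance := comap_snd_le A X
  have hXleB : MeasurableSpace.comap X inferInstance ≤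
      MeasurableSpace.comap (fun ω => (B ω, X ω)) inferInstance := comap_snd_le B X
  refine (ae_eq_condExp_of_forall_setIntegral_eq hmAX hh_int
    (fun s _ _ => integrable_condExp.integrableOn) (fun s hs _ => ?_)
    (stronglyMeasurable_condExp.mono hXleA).aestronglyMeasurable).symm
  refine setIntegral_eq_of_generateFrom hmAX (comap_prod_eq_generateFrom A X)
    (isPiSystem_comap_prod A X) integrable_condExp hh_int (integral_condExp hmX) ?_ hs
  rintro _ ⟨s1, t1, hs1, ht1, rfl⟩
  have hix_sm : StronglyMeasurable[MeasurableSpace.comap X inferInstance]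
      ((X ⁻¹' t1).indicator (fun _ => (1:ℝ))) :=
    stronglyMeasurable_const.indicator ⟨t1, ht1, rfl⟩
  have hia_int : Integrable ((A ⁻¹' s1).indicator (fun _ => (1:ℝ))) P :=
    (integrable_const (1:ℝ)).indicator (hA hs1)
  have hia_sm : AEStronglyMeasurable ((A ⁻¹' s1).indicator (fun _ => (1:ℝ))) P :=
    (measurable_const.indicator (hA hs1)).aestronglyMeasurable
  have hia_bdd : ∀ᵐ ω ∂P, |(A ⁻¹' s1).indicator (fun _ => (1:ℝ)) ω| ≤ 1 :=
    Filter.Eventually.of_forall fun ω => abs_indicator_one_le _ ω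
  have hva_bdd := abs_condexp_indicator_one_le
    (m := MeasurableSpace.comap X inferInstance) (P := P) (A ⁻¹' s1)
  -- LHS
  have hL : ∫ ω in A ⁻¹' s1 ∩ X ⁻¹' t1,
      (P[h | MeasurableSpace.comap X inferInstance]) ω ∂P =
      ∫ ω, ((X ⁻¹' t1).indicator (fun _ => (1:ℝ)) ω *
        (P[h | MeasurableSpace.comap X inferInstance]) ω) *
        (P[(A ⁻¹' s1).indicator (fun _ => (1:ℝ)) | MeasurableSpace.comap X inferInstance]) ω ∂P := by
    rw [setIntegral_inter_eq hA hX hs1 ht1]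
    refine integral_mul_condexp_bdd hmX (hix_sm.mul stronglyMeasurable_condExp) ?_ hia_sm hia_bdd hia_int
    exact integrable_condExp.indicator_one_mul (hX ht1)
  -- RHS
  have hR : ∫ ω in A ⁻¹' s1 ∩ X ⁻¹' t1, h ω ∂P =
      ∫ ω, ((X ⁻¹' t1).indicator (fun _ => (1:ℝ)) ω *
        (P[h | MeasurableSpace.comap X inferInstance]) ω) *
        (P[(A ⁻¹' s1).indicator (fun _ => (1:ℝ)) | MeasurableSpace.comap X inferInstance]) ω ∂P := by
    rw [setIntegral_inter_eq hA hX hs1 ht1]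
    have step1 : ∫ ω, ((X ⁻¹' t1).indicator (fun _ => (1:ℝ)) ω * h ω) *
        (A ⁻¹' s1).indicator (fun _ => (1:ℝ)) ω ∂P =
        ∫ ω, ((X ⁻¹' t1).indicator (fun _ => (1:ℝ)) ω * h ω) *
        (P[(A ⁻¹' s1).indicator (fun _ => (1:ℝ)) |
          MeasurableSpace.comap (fun ω => (B ω, X ω)) inferInstance]) ω ∂P :=
      integral_mul_condexp_bdd hmBX ((hix_sm.mono hXleB).mul hh_sm)
        (hh_int.indicator_one_mul (hX ht1)) hia_sm hia_bdd hia_int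
    have step2 : ∫ ω, ((X ⁻¹' t1).indicator (fun _ => (1:ℝ)) ω * h ω) *
        (P[(A ⁻¹' s1).indicator (fun _ => (1:ℝ)) |
          MeasurableSpace.comap (fun ω => (B ω, X ω)) inferInstance]) ω ∂P =
        ∫ ω, ((X ⁻¹' t1).indicator (fun _ => (1:ℝ)) ω *
          (P[(A ⁻¹' s1).indicator (fun _ => (1:ℝ)) | MeasurableSpace.comap X inferInstance]) ω) * h ω ∂P := by
      refine integral_congr_ae ?_
      filter_upwards [condexp_indicator_comap_prod_of_condIndepFun hA hB hX hInd hs1] with ω hω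
      rw [hω]; ring
    have hk_sm : StronglyMeasurable[MeasurableSpace.comap X inferInstance]
        (fun ω => (X ⁻¹' t1).indicator (fun _ => (1:ℝ)) ω *
          (P[(A ⁻¹' s1).indicator (fun _ => (1:ℝ)) | MeasurableSpace.comap X inferInstance]) ω) :=
      hix_sm.mul stronglyMeasurable_condExp
    have hk_bdd : ∀ᵐ ω ∂P, |(X ⁻¹' t1).indicator (fun _ => (1:ℝ)) ω *
        (P[(A ⁻¹' s1).indicator (fun _ => (1:ℝ)) | MeasurableSpace.comap X inferInstance]) ω| ≤ 1 := by
      filter_upwards [hva_bdd] with ω hb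
      rw [abs_mul]
      exact mul_le_one₀ (abs_indicator_one_le _ ω) (abs_nonneg _) hb
    rw [step1, step2, integral_bdd_mul_condexp hmX hk_sm hk_bdd hh_int]
    refine integral_congr_ae (Filter.Eventually.of_forall fun ω => by ring)
  rw [hL, hR]

end CI

/-- `E[Z | G = 1]` defined as `E[Z · 1{G=1}] / P(G=1)`. -/
noncomputable def condMeanTreated {Ω : Type*} [MeasurableSpace Ω] (P : Measure Ω)
    (G : Ω → ℝ) (Z : Ω → ℝ) : ℝ :=
  (∫ ω in {ω | G ω = 1}, Z ω ∂P) / (P {ω | G ω = 1}).toReal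

/-- under Assumption 1 (no anticipation), Assumption 2 (parallel trends),
Assumption 3(i) (G ⟂ M(g) ∣ X), Assumption 4 (positivity) and Assumption 5 (consistency,
built into the definitions of `M`, `Y₀`, `Y₁`, `ΔY`), the quantity
`E[Y1(0,M(0)) − Y0(0) | G=1]` is identified from the observed data:
`E[Y1(0,M(0)) − Y0(0) | G=1] = E[ν(0,X) | G=1] (= τ(0,0) by definition)`,
where `ν₀₀(x) = ν(0,x)` is a version of `E[δ(0,M,X) | G=0, X=x]`. -/
theorem identification_tau00
    {Ω 𝓧 : Type*} [MeasurableSpace Ω] [StandardBorelSpace Ω] [Nonempty Ω]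
    [MeasurableSpace 𝓧] [StandardBorelSpace 𝓧]
    (P : Measure Ω) [IsProbabilityMeasure P]
    -- primitives
    (G : Ω → ℝ) (X : Ω → 𝓧) (Y0 : ℝ → Ω → ℝ) (M' : ℝ → Ω → ℝ) (Y1 : ℝ → ℝ → Ω → ℝ)
    (hGmeas : Measurable G) (hG01 : ∀ ω, G ω = 0 ∨ G ω = 1) (hXmeas : Measurable X)
    (hY0meas : ∀ g ∈ ({0, 1} : Set ℝ), Measurable (Y0 g))
    (hM'meas : ∀ g ∈ ({0, 1} : Set ℝ), Measurable (M' g))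
    (hY1meas : ∀ g ∈ ({0, 1} : Set ℝ), Measurable (fun p : ℝ × Ω => Y1 g p.1 p.2))
    -- p = P(G=1) ∈ (0,1)
    (hp0 : 0 < P {ω | G ω = 1}) (hp1 : P {ω | G ω = 1} < 1)
    -- observed data (Assumption 5, consistency)
    (M : Ω → ℝ) (hM : M = fun ω => M' (G ω) ω)
    (Y0obs : Ω → ℝ) (hY0obs : Y0obs = fun ω => Y0 (G ω) ω)
    (Y1obs : Ω → ℝ) (hY1obs : Y1obs = fun ω => Y1 (G ω) (M ω) ω)
    (ΔY : Ω → ℝ) (hΔY : ΔY = fun ω => Y1obs ω - Y0obs ω)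
    -- integrability of everything appearing inside expectations
    (hΔYint : Integrable ΔY P) (hY00int : Integrable (Y0 0) P)
    (hYpotint : ∀ g ∈ ({0, 1} : Set ℝ), ∀ g' ∈ ({0, 1} : Set ℝ),
      Integrable (fun ω => Y1 g (M' g' ω) ω) P)
    -- Assumption 1 (no anticipation)
    (hNA : Y0 1 =ᵐ[P] Y0 0)
    -- Assumption 2 (parallel trends)
    (hPT : P[fun ω => Y1 0 (M' 0 ω) ω - Y0 0 ω |
        MeasurableSpace.comap (fun ω => (M' 0 ω, G ω, X ω)) inferInstance]
      =ᵐ[P] P[fun ω => Y1 0 (M' 0 ω) ω - Y0 0 ω |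
        MeasurableSpace.comap (fun ω => (M' 0 ω, X ω)) inferInstance])
    -- Assumption 3(i): G ⟂ M(g) ∣ X
    (hSI1 : ∀ g ∈ ({0, 1} : Set ℝ),
      CondIndepFun (MeasurableSpace.comap X inferInstance) hXmeas.comap_le G (M' g) P)
    -- Assumption 4 (positivity)
    (c : ℝ) (hc : 0 < c)
    (hpos1 : ENNReal.ofReal c ≤ P {ω | G ω = 1})
    (hpos2 : ∀ᵐ ω ∂P, c ≤
      (P[fun ω' => if G ω' = 0 then (1 : ℝ) else 0 |
        MeasurableSpace.comap X inferInstance]) ω)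
    (hpos3 : ∀ᵐ ω ∂P, c ≤
      (P[fun ω' => if G ω' = 0 then (1 : ℝ) else 0 |
        MeasurableSpace.comap (fun ω' => (M ω', X ω')) inferInstance]) ω)
    (hpos4 : ∀ᵐ ω ∂P, ∀ᵐ m ∂(condDistrib M (fun ω' => (G ω', X ω')) P (0, X ω)),
      ENNReal.ofReal c ≤
        Measure.rnDeriv (condDistrib M X P (X ω))
          (condDistrib M (fun ω' => (G ω', X ω')) P (0, X ω)) m)
    -- nuisance function δ(g,m,x), a version of E[ΔY ∣ G=g, M=m, X=x]
    (δ : ℝ → ℝ → 𝓧 → ℝ) (hδmeas : Measurable (fun p : ℝ × ℝ × 𝓧 => δ p.1 p.2.1 p.2.2))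
    (hδver : (fun ω => δ (G ω) (M ω) (X ω)) =ᵐ[P]
      P[ΔY | MeasurableSpace.comap (fun ω => (G ω, M ω, X ω)) inferInstance])
    (hδint : ∀ g ∈ ({0, 1} : Set ℝ), Integrable (fun ω => δ g (M ω) (X ω)) P)
    -- ν₀₀(x) = ν(0,x), a version of the inner conditional expectation E[δ(0,M,X) ∣ G=0, X=x]
    (ν00 : 𝓧 → ℝ) (hν00meas : Measurable ν00)
    (hν00 : ∀ᵐ ω ∂P, G ω = 0 → ν00 (X ω) =
      (P[fun ω' => δ 0 (M ω') (X ω') |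
        MeasurableSpace.comap (fun ω' => (G ω', X ω')) inferInstance]) ω)
    (hν00int : Integrable (fun ω => ν00 (X ω)) P) :
    condMeanTreated P G (fun ω => Y1 0 (M' 0 ω) ω - Y0 0 ω)
      = condMeanTreated P G (fun ω => ν00 (X ω)) := by
    classical
  have h01 : (0:ℝ) ∈ ({0, 1} : Set ℝ) := by simp
  have h11 : (1:ℝ) ∈ ({0, 1} : Set ℝ) := by simp
  have hM'0 : Measurable (M' 0) := hM'meas 0 h01
  have hMeq : M = fun ω => if G ω = 0 then M' 0 ω else M' 1 ω := by
    funext ω; rcases hG01 ω with h | h <;> simp [hM, h]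
  have hMmeas : Measurable M := by
    rw [hMeq]
    exact Measurable.ite (hGmeas (measurableSet_singleton 0)) (hM'meas 0 h01) (hM'meas 1 h11)
  set W : Ω → ℝ := fun ω => Y1 0 (M' 0 ω) ω - Y0 0 ω with hWdef
  have hWint : Integrable W P := (hYpotint 0 h01 0 h01).sub hY00int
  have hmA : MeasurableSpace.comap (fun ω => (M' 0 ω, G ω, X ω)) inferInstance ≤ ‹MeasurableSpace Ω› := (hM'0.prodMk (hGmeas.prodMk hXmeas)).comap_le
  have hmB : MeasurableSpace.comap (fun ω => (M' 0 ω, X ω)) inferInstance ≤ ‹MeasurableSpace Ω› := (hM'0.prodMk hXmeas).comap_le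
  have hmC : MeasurableSpace.comap (fun ω => (G ω, X ω)) inferInstance ≤ ‹MeasurableSpace Ω› := (hGmeas.prodMk hXmeas).comap_le
  have hmD : MeasurableSpace.comap X inferInstance ≤ ‹MeasurableSpace Ω› := hXmeas.comap_le
  have hmE : MeasurableSpace.comap (fun ω => (G ω, M ω, X ω)) inferInstance ≤ ‹MeasurableSpace Ω› := (hGmeas.prodMk (hMmeas.prodMk hXmeas)).comap_le
  have hCA : MeasurableSpace.comap (fun ω => (G ω, X ω)) inferInstance ≤ MeasurableSpace.comap (fun ω => (M' 0 ω, G ω, X ω)) inferInstance :=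
    comap_le_of_factor (Ω := Ω) Prod.snd measurable_snd (fun ω => rfl)
  have hCE : MeasurableSpace.comap (fun ω => (G ω, X ω)) inferInstance ≤ MeasurableSpace.comap (fun ω => (G ω, M ω, X ω)) inferInstance :=
    comap_le_of_factor (Ω := Ω) (fun p : ℝ × ℝ × 𝓧 => (p.1, p.2.2))
      (measurable_fst.prodMk (measurable_snd.snd)) (fun ω => rfl)
  have hS_meas : MeasurableSet (G ⁻¹' ({1} : Set ℝ)) := hGmeas (measurableSet_singleton 1)
  have hS_mA : MeasurableSet[MeasurableSpace.comap (fun ω => (M' 0 ω, G ω, X ω)) inferInstance] (G ⁻¹' ({1} : Set ℝ)) :=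
    ⟨(fun p : ℝ × ℝ × 𝓧 => p.2.1) ⁻¹' {1}, measurable_snd.fst (measurableSet_singleton 1), rfl⟩
  have hi1_int : Integrable ((G ⁻¹' ({1} : Set ℝ)).indicator (fun _ => (1:ℝ))) P := (integrable_const (1:ℝ)).indicator hS_meas
  have hi1_aesm : AEStronglyMeasurable ((G ⁻¹' ({1} : Set ℝ)).indicator (fun _ => (1:ℝ))) P :=
    (measurable_const.indicator hS_meas).aestronglyMeasurable
  have hi1_bdd : ∀ᵐ ω ∂P, |((G ⁻¹' ({1} : Set ℝ)).indicator (fun _ => (1:ℝ))) ω| ≤ 1 :=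
    Filter.Eventually.of_forall fun ω => abs_indicator_one_le _ ω
  have hS0_meas : MeasurableSet (G ⁻¹' ({0} : Set ℝ)) := hGmeas (measurableSet_singleton 0)
  have hi0_int : Integrable ((G ⁻¹' ({0} : Set ℝ)).indicator (fun _ => (1:ℝ))) P :=
    (integrable_const (1:ℝ)).indicator hS0_meas
  have hi0_smC : StronglyMeasurable[MeasurableSpace.comap (fun ω => (G ω, X ω)) inferInstance] ((G ⁻¹' ({0} : Set ℝ)).indicator (fun _ => (1:ℝ))) :=
    stronglyMeasurable_const.indicator
      ⟨(fun p : ℝ × 𝓧 => p.1) ⁻¹' {0}, measurable_fst (measurableSet_singleton 0), rfl⟩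
  have hi0_smE : StronglyMeasurable[MeasurableSpace.comap (fun ω => (G ω, M ω, X ω)) inferInstance] ((G ⁻¹' ({0} : Set ℝ)).indicator (fun _ => (1:ℝ))) :=
    stronglyMeasurable_const.indicator
      ⟨(fun p : ℝ × ℝ × 𝓧 => p.1) ⁻¹' {0}, measurable_fst (measurableSet_singleton 0), rfl⟩
  have hCI1 : P[(G ⁻¹' ({1} : Set ℝ)).indicator (fun _ => (1:ℝ)) | MeasurableSpace.comap (fun ω => (M' 0 ω, X ω)) inferInstance] =ᵐ[P] P[(G ⁻¹' ({1} : Set ℝ)).indicator (fun _ => (1:ℝ)) | MeasurableSpace.comap X inferInstance] :=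
    condexp_indicator_comap_prod_of_condIndepFun hGmeas hM'0 hXmeas (hSI1 0 h01)
      (measurableSet_singleton 1)
  have hCI2 : P[P[W | MeasurableSpace.comap (fun ω => (M' 0 ω, X ω)) inferInstance] | MeasurableSpace.comap (fun ω => (G ω, X ω)) inferInstance] =ᵐ[P] P[P[W | MeasurableSpace.comap (fun ω => (M' 0 ω, X ω)) inferInstance] | MeasurableSpace.comap X inferInstance] :=
    condexp_comap_prod_of_condIndepFun hGmeas hM'0 hXmeas (hSI1 0 h01)
      stronglyMeasurable_condExp integrable_condExp
  have hq4 : P[W | MeasurableSpace.comap (fun ω => (G ω, X ω)) inferInstance] =ᵐ[P] P[P[W | MeasurableSpace.comap (fun ω => (M' 0 ω, X ω)) inferInstance] | MeasurableSpace.comap X inferInstance] := by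
    have q4a : P[P[W | MeasurableSpace.comap (fun ω => (M' 0 ω, G ω, X ω)) inferInstance] | MeasurableSpace.comap (fun ω => (G ω, X ω)) inferInstance] =ᵐ[P] P[W | MeasurableSpace.comap (fun ω => (G ω, X ω)) inferInstance] := condExp_condExp_of_le hCA hmA
    have q4b : P[P[W | MeasurableSpace.comap (fun ω => (M' 0 ω, G ω, X ω)) inferInstance] | MeasurableSpace.comap (fun ω => (G ω, X ω)) inferInstance] =ᵐ[P] P[P[W | MeasurableSpace.comap (fun ω => (M' 0 ω, X ω)) inferInstance] | MeasurableSpace.comap (fun ω => (G ω, X ω)) inferInstance] := condExp_congr_ae hPT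
    exact q4a.symm.trans (q4b.trans hCI2)
  have hQ : (fun ω => ((G ⁻¹' ({0} : Set ℝ)).indicator (fun _ => (1:ℝ))) ω * ν00 (X ω)) =ᵐ[P] (fun ω => ((G ⁻¹' ({0} : Set ℝ)).indicator (fun _ => (1:ℝ))) ω * (P[P[W | MeasurableSpace.comap (fun ω => (M' 0 ω, X ω)) inferInstance] | MeasurableSpace.comap X inferInstance]) ω) := by
    have u1 : (fun ω => ((G ⁻¹' ({0} : Set ℝ)).indicator (fun _ => (1:ℝ))) ω * ν00 (X ω)) =ᵐ[P]
        (fun ω => ((G ⁻¹' ({0} : Set ℝ)).indicator (fun _ => (1:ℝ))) ω * (P[(fun ω => δ 0 (M ω) (X ω)) | MeasurableSpace.comap (fun ω => (G ω, X ω)) inferInstance]) ω) := by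
      filter_upwards [hν00] with ω hω
      by_cases h : G ω = 0
      · rw [hω h]
      · rw [Set.indicator_of_notMem (show ω ∉ G ⁻¹' ({0} : Set ℝ) from h)]
        simp
    have u2 : (fun ω => ((G ⁻¹' ({0} : Set ℝ)).indicator (fun _ => (1:ℝ))) ω * (P[(fun ω => δ 0 (M ω) (X ω)) | MeasurableSpace.comap (fun ω => (G ω, X ω)) inferInstance]) ω) =ᵐ[P]
        P[fun ω => ((G ⁻¹' ({0} : Set ℝ)).indicator (fun _ => (1:ℝ))) ω * δ 0 (M ω) (X ω) | MeasurableSpace.comap (fun ω => (G ω, X ω)) inferInstance] :=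
      (condExp_mul_of_stronglyMeasurable_left hi0_smC
        ((hδint 0 h01).indicator_one_mul hS0_meas) (hδint 0 h01)).symm
    have u3 : (fun ω => ((G ⁻¹' ({0} : Set ℝ)).indicator (fun _ => (1:ℝ))) ω * δ 0 (M ω) (X ω)) =ᵐ[P]
        (fun ω => ((G ⁻¹' ({0} : Set ℝ)).indicator (fun _ => (1:ℝ))) ω * (P[ΔY | MeasurableSpace.comap (fun ω => (G ω, M ω, X ω)) inferInstance]) ω) := by
      filter_upwards [hδver] with ω hω
      by_cases h : G ω = 0
      · rw [show δ 0 (M ω) (X ω) = δ (G ω) (M ω) (X ω) by rw [h], hω]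
      · rw [Set.indicator_of_notMem (show ω ∉ G ⁻¹' ({0} : Set ℝ) from h)]
        simp
    have u4 : (fun ω => ((G ⁻¹' ({0} : Set ℝ)).indicator (fun _ => (1:ℝ))) ω * (P[ΔY | MeasurableSpace.comap (fun ω => (G ω, M ω, X ω)) inferInstance]) ω) =ᵐ[P]
        P[fun ω => ((G ⁻¹' ({0} : Set ℝ)).indicator (fun _ => (1:ℝ))) ω * ΔY ω | MeasurableSpace.comap (fun ω => (G ω, M ω, X ω)) inferInstance] :=
      (condExp_mul_of_stronglyMeasurable_left hi0_smE
        (hΔYint.indicator_one_mul hS0_meas) hΔYint).symm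
    have u5 : ∀ ω, ((G ⁻¹' ({0} : Set ℝ)).indicator (fun _ => (1:ℝ))) ω * ΔY ω = ((G ⁻¹' ({0} : Set ℝ)).indicator (fun _ => (1:ℝ))) ω * W ω := by
      intro ω
      by_cases h : G ω = 0
      · simp [hΔY, hY1obs, hY0obs, hM, h, hWdef]
      · rw [Set.indicator_of_notMem (show ω ∉ G ⁻¹' ({0} : Set ℝ) from h)]
        simp
    have u6 : P[fun ω => ((G ⁻¹' ({0} : Set ℝ)).indicator (fun _ => (1:ℝ))) ω * W ω | MeasurableSpace.comap (fun ω => (G ω, X ω)) inferInstance] =ᵐ[P]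
        (fun ω => ((G ⁻¹' ({0} : Set ℝ)).indicator (fun _ => (1:ℝ))) ω * (P[W | MeasurableSpace.comap (fun ω => (G ω, X ω)) inferInstance]) ω) :=
      condExp_mul_of_stronglyMeasurable_left hi0_smC (hWint.indicator_one_mul hS0_meas) hWint
    have u7 : (fun ω => ((G ⁻¹' ({0} : Set ℝ)).indicator (fun _ => (1:ℝ))) ω * (P[W | MeasurableSpace.comap (fun ω => (G ω, X ω)) inferInstance]) ω) =ᵐ[P]
        (fun ω => ((G ⁻¹' ({0} : Set ℝ)).indicator (fun _ => (1:ℝ))) ω * (P[P[W | MeasurableSpace.comap (fun ω => (M' 0 ω, X ω)) inferInstance] | MeasurableSpace.comap X inferInstance]) ω) := by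
      filter_upwards [hq4] with ω hω
      rw [hω]
    have hmid : P[fun ω => ((G ⁻¹' ({0} : Set ℝ)).indicator (fun _ => (1:ℝ))) ω * δ 0 (M ω) (X ω) | MeasurableSpace.comap (fun ω => (G ω, X ω)) inferInstance] =ᵐ[P]
        P[fun ω => ((G ⁻¹' ({0} : Set ℝ)).indicator (fun _ => (1:ℝ))) ω * W ω | MeasurableSpace.comap (fun ω => (G ω, X ω)) inferInstance] :=
      ((condExp_congr_ae (u3.trans u4)).trans (condExp_condExp_of_le hCE hmE)).trans
        (condExp_congr_ae (Filter.Eventually.of_forall u5))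
    exact u1.trans (u2.trans (hmid.trans (u6.trans u7)))
  -- identify ν00 ∘ X with kk
  have hν00_smD : StronglyMeasurable[MeasurableSpace.comap X inferInstance] (fun ω => ν00 (X ω)) :=
    (hν00meas.comp (measurable_iff_comap_le.mpr le_rfl)).stronglyMeasurable
  have hr1 : P[fun ω => ν00 (X ω) * ((G ⁻¹' ({0} : Set ℝ)).indicator (fun _ => (1:ℝ))) ω | MeasurableSpace.comap X inferInstance] =ᵐ[P]
      (fun ω => ν00 (X ω) * (P[(G ⁻¹' ({0} : Set ℝ)).indicator (fun _ => (1:ℝ)) | MeasurableSpace.comap X inferInstance]) ω) :=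
    condExp_mul_of_stronglyMeasurable_left hν00_smD
      ((hν00int.indicator_one_mul hS0_meas).congr
        (Filter.Eventually.of_forall fun ω => by simp only [Pi.mul_apply]; ring)) hi0_int
  have hr2 : P[fun ω => (P[P[W | MeasurableSpace.comap (fun ω => (M' 0 ω, X ω)) inferInstance] | MeasurableSpace.comap X inferInstance]) ω * ((G ⁻¹' ({0} : Set ℝ)).indicator (fun _ => (1:ℝ))) ω | MeasurableSpace.comap X inferInstance] =ᵐ[P]
      (fun ω => (P[P[W | MeasurableSpace.comap (fun ω => (M' 0 ω, X ω)) inferInstance] | MeasurableSpace.comap X inferInstance]) ω * (P[(G ⁻¹' ({0} : Set ℝ)).indicator (fun _ => (1:ℝ)) | MeasurableSpace.comap X inferInstance]) ω) :=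
    condExp_mul_of_stronglyMeasurable_left stronglyMeasurable_condExp
      ((integrable_condExp.indicator_one_mul hS0_meas).congr
        (Filter.Eventually.of_forall fun ω => by simp only [Pi.mul_apply]; ring)) hi0_int
  have hr3 : P[fun ω => ν00 (X ω) * ((G ⁻¹' ({0} : Set ℝ)).indicator (fun _ => (1:ℝ))) ω | MeasurableSpace.comap X inferInstance] =ᵐ[P]
      P[fun ω => (P[P[W | MeasurableSpace.comap (fun ω => (M' 0 ω, X ω)) inferInstance] | MeasurableSpace.comap X inferInstance]) ω * ((G ⁻¹' ({0} : Set ℝ)).indicator (fun _ => (1:ℝ))) ω | MeasurableSpace.comap X inferInstance] := by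
    refine condExp_congr_ae ?_
    filter_upwards [hQ] with ω hω
    linear_combination hω
  have hpos2' : ∀ᵐ ω ∂P, c ≤ (P[(G ⁻¹' ({0} : Set ℝ)).indicator (fun _ => (1:ℝ)) | MeasurableSpace.comap X inferInstance]) ω := by
    have heq : (fun ω' => if G ω' = 0 then (1:ℝ) else 0) = ((G ⁻¹' ({0} : Set ℝ)).indicator (fun _ => (1:ℝ))) := by
      funext ω
      by_cases h : G ω = 0 <;> simp [Set.indicator_apply, h]
    rw [← heq]
    exact hpos2
  have hF6 : (P[P[W | MeasurableSpace.comap (fun ω => (M' 0 ω, X ω)) inferInstance] | MeasurableSpace.comap X inferInstance]) =ᵐ[P] (fun ω => ν00 (X ω)) := by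
    have hcomb : (fun ω => ν00 (X ω) * (P[(G ⁻¹' ({0} : Set ℝ)).indicator (fun _ => (1:ℝ)) | MeasurableSpace.comap X inferInstance]) ω) =ᵐ[P]
        (fun ω => (P[P[W | MeasurableSpace.comap (fun ω => (M' 0 ω, X ω)) inferInstance] | MeasurableSpace.comap X inferInstance]) ω * (P[(G ⁻¹' ({0} : Set ℝ)).indicator (fun _ => (1:ℝ)) | MeasurableSpace.comap X inferInstance]) ω) := hr1.symm.trans (hr3.trans hr2)
    filter_upwards [hcomb, hpos2'] with ω h1 h2
    have he0 : (P[(G ⁻¹' ({0} : Set ℝ)).indicator (fun _ => (1:ℝ)) | MeasurableSpace.comap X inferInstance]) ω ≠ 0 := ne_of_gt (lt_of_lt_of_le hc h2)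
    exact (mul_right_cancel₀ he0 h1).symm
  -- numerator chain
  have hNum : ∫ ω in G ⁻¹' ({1} : Set ℝ), W ω ∂P = ∫ ω in G ⁻¹' ({1} : Set ℝ), ν00 (X ω) ∂P := by
    calc ∫ ω in G ⁻¹' ({1} : Set ℝ), W ω ∂P
        = ∫ ω in G ⁻¹' ({1} : Set ℝ), (P[W | MeasurableSpace.comap (fun ω => (M' 0 ω, G ω, X ω)) inferInstance]) ω ∂P := (setIntegral_condExp hmA hWint hS_mA).symm
      _ = ∫ ω in G ⁻¹' ({1} : Set ℝ), (P[W | MeasurableSpace.comap (fun ω => (M' 0 ω, X ω)) inferInstance]) ω ∂P :=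
          setIntegral_congr_ae hS_meas (hPT.mono fun ω hω _ => hω)
      _ = ∫ ω, ((G ⁻¹' ({1} : Set ℝ)).indicator (fun _ => (1:ℝ))) ω * (P[W | MeasurableSpace.comap (fun ω => (M' 0 ω, X ω)) inferInstance]) ω ∂P := setIntegral_eq_indicator_mul _ hS_meas
      _ = ∫ ω, (P[W | MeasurableSpace.comap (fun ω => (M' 0 ω, X ω)) inferInstance]) ω * ((G ⁻¹' ({1} : Set ℝ)).indicator (fun _ => (1:ℝ))) ω ∂P :=
          integral_congr_ae (Filter.Eventually.of_forall fun ω => mul_comm _ _)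
      _ = ∫ ω, (P[W | MeasurableSpace.comap (fun ω => (M' 0 ω, X ω)) inferInstance]) ω * (P[(G ⁻¹' ({1} : Set ℝ)).indicator (fun _ => (1:ℝ)) | MeasurableSpace.comap (fun ω => (M' 0 ω, X ω)) inferInstance]) ω ∂P :=
          integral_mul_condexp_bdd hmB stronglyMeasurable_condExp integrable_condExp
            hi1_aesm hi1_bdd hi1_int
      _ = ∫ ω, (P[W | MeasurableSpace.comap (fun ω => (M' 0 ω, X ω)) inferInstance]) ω * (P[(G ⁻¹' ({1} : Set ℝ)).indicator (fun _ => (1:ℝ)) | MeasurableSpace.comap X inferInstance]) ω ∂P := by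
          refine integral_congr_ae ?_
          filter_upwards [hCI1] with ω hω
          rw [hω]
      _ = ∫ ω, (P[(G ⁻¹' ({1} : Set ℝ)).indicator (fun _ => (1:ℝ)) | MeasurableSpace.comap X inferInstance]) ω * (P[W | MeasurableSpace.comap (fun ω => (M' 0 ω, X ω)) inferInstance]) ω ∂P :=
          integral_congr_ae (Filter.Eventually.of_forall fun ω => mul_comm _ _)
      _ = ∫ ω, (P[(G ⁻¹' ({1} : Set ℝ)).indicator (fun _ => (1:ℝ)) | MeasurableSpace.comap X inferInstance]) ω * (P[P[W | MeasurableSpace.comap (fun ω => (M' 0 ω, X ω)) inferInstance] | MeasurableSpace.comap X inferInstance]) ω ∂P :=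
          integral_bdd_mul_condexp hmD stronglyMeasurable_condExp
            (abs_condexp_indicator_one_le _) integrable_condExp
      _ = ∫ ω, (P[P[W | MeasurableSpace.comap (fun ω => (M' 0 ω, X ω)) inferInstance] | MeasurableSpace.comap X inferInstance]) ω * (P[(G ⁻¹' ({1} : Set ℝ)).indicator (fun _ => (1:ℝ)) | MeasurableSpace.comap X inferInstance]) ω ∂P :=
          integral_congr_ae (Filter.Eventually.of_forall fun ω => mul_comm _ _)
      _ = ∫ ω, (P[P[W | MeasurableSpace.comap (fun ω => (M' 0 ω, X ω)) inferInstance] | MeasurableSpace.comap X inferInstance]) ω * ((G ⁻¹' ({1} : Set ℝ)).indicator (fun _ => (1:ℝ))) ω ∂P :=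
          (integral_mul_condexp_bdd hmD stronglyMeasurable_condExp integrable_condExp
            hi1_aesm hi1_bdd hi1_int).symm
      _ = ∫ ω, ((G ⁻¹' ({1} : Set ℝ)).indicator (fun _ => (1:ℝ))) ω * (P[P[W | MeasurableSpace.comap (fun ω => (M' 0 ω, X ω)) inferInstance] | MeasurableSpace.comap X inferInstance]) ω ∂P :=
          integral_congr_ae (Filter.Eventually.of_forall fun ω => mul_comm _ _)
      _ = ∫ ω in G ⁻¹' ({1} : Set ℝ), (P[P[W | MeasurableSpace.comap (fun ω => (M' 0 ω, X ω)) inferInstance] | MeasurableSpace.comap X inferInstance]) ω ∂P := (setIntegral_eq_indicator_mul _ hS_meas).symm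
      _ = ∫ ω in G ⁻¹' ({1} : Set ℝ), ν00 (X ω) ∂P :=
          setIntegral_congr_ae hS_meas (hF6.mono fun ω hω _ => hω)
  simp only [condMeanTreated]
  rw [show {ω | G ω = 1} = G ⁻¹' ({1} : Set ℝ) from rfl, hNum]
end

section
/- Mean-zero property of the influence function φ(0,0) at the true nuisance functions (unbiasedness part of Theorem 2): with τ₀₀ := E[ν₀(X) | G=1], it holds that E[ (1−G)·(π(X)/(1−π(X)))·(ΔY − ν₀(X)) + G·(ν₀(X) − τ₀₀) ] = 0; equivalently, the efficient influence function φ(0,0) = (1−G)/p · π(X)/(1−π(X)) · (ΔY − ν₀(X)) + G/p · (ν₀(X) − τ₀₀) has expectation zero. -/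
open MeasureTheory

/-- **mean-zero property of the efficient influence function φ(0,0)**:
with `τ₀₀ := E[ν₀(X) | G=1] = E[G·ν₀(X)]/p`, at the true nuisance functions
`E[(1−G)·(π(X)/(1−π(X)))·(ΔY − ν₀(X)) + G·(ν₀(X) − τ₀₀)] = 0`;
equivalently the efficient influence function
`φ(0,0) = (1−G)/p · π(X)/(1−π(X)) · (ΔY − ν₀(X)) + G/p · (ν₀(X) − τ₀₀)`
has expectation zero. -/
theorem eif_tau00_mean_zero
    {Ω 𝓧 : Type*} [MeasurableSpace Ω] [MeasurableSpace 𝓧]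
    (P : Measure Ω) [IsProbabilityMeasure P]
    (G : Ω → ℝ) (hGmeas : Measurable G) (hG01 : ∀ ω, G ω = 0 ∨ G ω = 1)
    (hp0 : 0 < P {ω | G ω = 1}) (hp1 : P {ω | G ω = 1} < 1)
    (X : Ω → 𝓧) (hXmeas : Measurable X)
    (M : Ω → ℝ) (hMmeas : Measurable M)
    (ΔY : Ω → ℝ) (hΔYint : Integrable ΔY P)
    -- π(x), a measurable version of P(G=1 ∣ X=x), with π(X) ≤ 1−c a.s.
    (π : 𝓧 → ℝ) (hπmeas : Measurable π)
    (hπver : (fun ω => π (X ω)) =ᵐ[P] P[G | MeasurableSpace.comap X inferInstance])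
    (c : ℝ) (hc : 0 < c) (hπle : ∀ᵐ ω ∂P, π (X ω) ≤ 1 - c)
    -- ν₀(x), a version of E[ΔY ∣ G=0, X=x]
    (ν0 : 𝓧 → ℝ) (hν0meas : Measurable ν0)
    (hν0ver : (fun ω => (1 - G ω) * ν0 (X ω)) =ᵐ[P]
      fun ω => (1 - G ω) *
        (P[ΔY | MeasurableSpace.comap (fun ω' => (G ω', X ω')) inferInstance]) ω)
    (hν0int : Integrable (fun ω => ν0 (X ω)) P)
    -- all displayed expectations are finite
    (hφint : Integrable (fun ω =>
      (1 - G ω) * (π (X ω) / (1 - π (X ω))) * (ΔY ω - ν0 (X ω))) P)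
    -- τ₀₀ = E[ν₀(X) | G=1]
    (τ00 : ℝ)
    (hτ00 : τ00 = (∫ ω, G ω * ν0 (X ω) ∂P) / (P {ω | G ω = 1}).toReal) :
    ∫ ω, ((1 - G ω) * (π (X ω) / (1 - π (X ω))) * (ΔY ω - ν0 (X ω))
      + G ω * (ν0 (X ω) - τ00)) ∂P = 0 := by
  have hm : MeasurableSpace.comap (fun ω' => (G ω', X ω')) inferInstance ≤ _ :=
    (hGmeas.prodMk hXmeas).comap_le
  have hT : Measurable[MeasurableSpace.comap (fun ω' => (G ω', X ω')) inferInstance]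
      (fun ω => (G ω, X ω)) := Measurable.of_comap_le le_rfl
  -- h ω := (1 - G ω) * (π (X ω) / (1 - π (X ω))) is m-strongly-measurable
  have hψ : Measurable (fun q : ℝ × 𝓧 => (1 - q.1) * (π q.2 / (1 - π q.2))) := by
    apply Measurable.mul
    · exact (measurable_const.sub measurable_fst)
    · exact (hπmeas.comp measurable_snd).div
        (measurable_const.sub (hπmeas.comp measurable_snd))
  have hh_sm : StronglyMeasurable[MeasurableSpace.comap
      (fun ω' => (G ω', X ω')) inferInstance]
      (fun ω => (1 - G ω) * (π (X ω) / (1 - π (X ω)))) :=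
    (hψ.comp hT).stronglyMeasurable
  -- π(X) is a.e. nonnegative
  have hG0 : (0 : Ω → ℝ) ≤ᵐ[P] G := by
    filter_upwards with ω
    rcases hG01 ω with h | h <;> simp [h]
  have hπ0 : ∀ᵐ ω ∂P, 0 ≤ π (X ω) := by
    filter_upwards [hπver, condExp_nonneg (μ := P)
      (m := MeasurableSpace.comap X inferInstance) hG0] with ω h1 h2
    rw [h1]; exact h2
  -- a.e. bound on h
  have hhbd : ∀ᵐ ω ∂P, ‖(1 - G ω) * (π (X ω) / (1 - π (X ω)))‖ ≤ (1 - c) / c := by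
    filter_upwards [hπ0, hπle] with ω h0 hle
    have h1π : c ≤ 1 - π (X ω) := by linarith
    have hfle : π (X ω) / (1 - π (X ω)) ≤ (1 - c) / c :=
      div_le_div₀ (by linarith) hle hc h1π
    have hf0 : 0 ≤ π (X ω) / (1 - π (X ω)) := div_nonneg h0 (by linarith)
    have hG1 : ‖1 - G ω‖ ≤ 1 := by
      rcases hG01 ω with h | h <;> simp [h]
    calc ‖(1 - G ω) * (π (X ω) / (1 - π (X ω)))‖
        = ‖1 - G ω‖ * ‖π (X ω) / (1 - π (X ω))‖ := norm_mul _ _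
      _ ≤ 1 * ((1 - c) / c) := by
          apply mul_le_mul hG1 _ (norm_nonneg _) zero_le_one
          rwa [Real.norm_of_nonneg hf0]
      _ = (1 - c) / c := one_mul _
  have hh_aesm : AEStronglyMeasurable
      (fun ω => (1 - G ω) * (π (X ω) / (1 - π (X ω)))) P :=
    (hh_sm.mono hm).aestronglyMeasurable
  -- integrability of the pieces
  have hhν : Integrable
      (fun ω => (1 - G ω) * (π (X ω) / (1 - π (X ω))) * ν0 (X ω)) P :=
    hν0int.bdd_mul hh_aesm hhbd
  have hhΔ : Integrable
      (fun ω => (1 - G ω) * (π (X ω) / (1 - π (X ω))) * ΔY ω) P := by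
    have := hφint.add hhν
    refine this.congr (Filter.Eventually.of_forall fun ω => ?_)
    simp only [Pi.add_apply]
    ring
  -- Part A : ∫ h * (ΔY - ν₀X) = 0
  have hA : ∫ ω, (1 - G ω) * (π (X ω) / (1 - π (X ω))) * (ΔY ω - ν0 (X ω)) ∂P
      = 0 := by
    have hsplit :
        ∫ ω, (1 - G ω) * (π (X ω) / (1 - π (X ω))) * (ΔY ω - ν0 (X ω)) ∂P
          = (∫ ω, (1 - G ω) * (π (X ω) / (1 - π (X ω))) * ΔY ω ∂P)
            - ∫ ω, (1 - G ω) * (π (X ω) / (1 - π (X ω))) * ν0 (X ω) ∂P := by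
      rw [← integral_sub hhΔ hhν]
      exact integral_congr_ae (Filter.Eventually.of_forall fun ω => by ring)
    have hmul : P[(fun ω => (1 - G ω) * (π (X ω) / (1 - π (X ω)))) * ΔY | MeasurableSpace.comap (fun ω' => (G ω', X ω')) inferInstance]
        =ᵐ[P] (fun ω => (1 - G ω) * (π (X ω) / (1 - π (X ω)))) * P[ΔY | MeasurableSpace.comap (fun ω' => (G ω', X ω')) inferInstance] :=
      condExp_mul_of_stronglyMeasurable_left hh_sm
        (by exact hhΔ.congr (Filter.Eventually.of_forall fun ω => rfl)) hΔYint
    have h1 : ∫ ω, (1 - G ω) * (π (X ω) / (1 - π (X ω))) * ΔY ω ∂P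
        = ∫ ω, (1 - G ω) * (π (X ω) / (1 - π (X ω))) * (P[ΔY | MeasurableSpace.comap (fun ω' => (G ω', X ω')) inferInstance]) ω ∂P :=
      calc ∫ ω, (1 - G ω) * (π (X ω) / (1 - π (X ω))) * ΔY ω ∂P
          = ∫ ω, (P[(fun ω => (1 - G ω) * (π (X ω) / (1 - π (X ω)))) * ΔY | MeasurableSpace.comap (fun ω' => (G ω', X ω')) inferInstance]) ω ∂P :=
            (integral_condExp (μ := P)
              (f := (fun ω => (1 - G ω) * (π (X ω) / (1 - π (X ω)))) * ΔY) hm).symm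
        _ = ∫ ω, (1 - G ω) * (π (X ω) / (1 - π (X ω))) * (P[ΔY | MeasurableSpace.comap (fun ω' => (G ω', X ω')) inferInstance]) ω ∂P :=
            integral_congr_ae hmul
    have h2 : (fun ω => (1 - G ω) * (π (X ω) / (1 - π (X ω))) * (P[ΔY | MeasurableSpace.comap (fun ω' => (G ω', X ω')) inferInstance]) ω)
        =ᵐ[P] fun ω => (1 - G ω) * (π (X ω) / (1 - π (X ω))) * ν0 (X ω) := by
      filter_upwards [hν0ver] with ω hω
      have h' : (1 - G ω) * (P[ΔY | MeasurableSpace.comap (fun ω' => (G ω', X ω')) inferInstance]) ω = (1 - G ω) * ν0 (X ω) := hω.symm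
      calc (1 - G ω) * (π (X ω) / (1 - π (X ω))) * (P[ΔY | MeasurableSpace.comap (fun ω' => (G ω', X ω')) inferInstance]) ω
          = (π (X ω) / (1 - π (X ω))) * ((1 - G ω) * (P[ΔY | MeasurableSpace.comap (fun ω' => (G ω', X ω')) inferInstance]) ω) := by ring
        _ = (π (X ω) / (1 - π (X ω))) * ((1 - G ω) * ν0 (X ω)) := by rw [h']
        _ = (1 - G ω) * (π (X ω) / (1 - π (X ω))) * ν0 (X ω) := by ring
    rw [hsplit, h1, integral_congr_ae h2, sub_self]
  -- Part B : ∫ G * (ν₀X - τ₀₀) = 0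
  have hGset := hGmeas (measurableSet_singleton (1 : ℝ))
  have hGint : ∫ ω, G ω ∂P = (P {ω | G ω = 1}).toReal := by
    have hGind : ∫ ω, G ω ∂P
        = ∫ ω, Set.indicator {ω | G ω = 1} (fun _ => (1 : ℝ)) ω ∂P := by
      refine integral_congr_ae (Filter.Eventually.of_forall fun ω => ?_)
      rcases hG01 ω with h | h
      · rw [h, Set.indicator_of_notMem]
        simp [Set.mem_setOf_eq, h]
      · rw [h, Set.indicator_of_mem]
        exact h
    have h2 : ∫ ω, Set.indicator {ω | G ω = 1} (fun _ => (1 : ℝ)) ω ∂P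
        = (P {ω | G ω = 1}).toReal • (1 : ℝ) :=
      integral_indicator_const (1 : ℝ) hGset
    rw [hGind, h2, smul_eq_mul, mul_one]
  have hGν : Integrable (fun ω => G ω * ν0 (X ω)) P := by
    refine hν0int.bdd_mul (c := 1) hGmeas.aestronglyMeasurable
      (Filter.Eventually.of_forall fun ω => ?_)
    rcases hG01 ω with h | h <;> simp [h]
  have hGc : Integrable (fun ω => G ω * τ00) P :=
    (integrable_const τ00).bdd_mul (c := 1) hGmeas.aestronglyMeasurable
      (Filter.Eventually.of_forall fun ω => by rcases hG01 ω with h | h <;> simp [h])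
  have hptoReal : (P {ω | G ω = 1}).toReal ≠ 0 := by
    have := ENNReal.toReal_pos hp0.ne' (measure_ne_top P _)
    exact this.ne'
  have hB : ∫ ω, G ω * (ν0 (X ω) - τ00) ∂P = 0 := by
    have hsplit : ∫ ω, G ω * (ν0 (X ω) - τ00) ∂P
        = (∫ ω, G ω * ν0 (X ω) ∂P) - ∫ ω, G ω * τ00 ∂P := by
      rw [← integral_sub hGν hGc]
      exact integral_congr_ae (Filter.Eventually.of_forall fun ω => by ring)
    rw [hsplit, integral_mul_const τ00 G, hGint, hτ00]
    field_simp
    ring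
  -- combine
  have hGsub : Integrable (fun ω => G ω * (ν0 (X ω) - τ00)) P := by
    refine (hGν.sub hGc).congr (Filter.Eventually.of_forall fun ω => ?_)
    simp only [Pi.sub_apply]
    ring
  rw [integral_add hφint hGsub, hA, hB, add_zero]
end

section
/- Mean-zero property of the influence function φ(0,1) at the true nuisance functions (unbiasedness part of Theorem 2): with τ₀₁ := E[δ₀(M,X) | G=1], it holds that E[ (1−G)·(ϖ(M,X)/(1−ϖ(M,X)))·(ΔY − δ₀(M,X)) + G·(δ₀(M,X) − τ₀₁) ] = 0; equivalently, the efficient influence function φ(0,1) = (1−G)/p · ϖ(M,X)/(1−ϖ(M,X)) · (ΔY − δ₀(M,X)) + G/p · (δ₀(M,X) − τ₀₁) has expectation zero. -/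
open MeasureTheory

private lemma aux_int_zero {Ω : Type*} [mΩ : MeasurableSpace Ω] (P : Measure Ω)
    [IsProbabilityMeasure P] {m : MeasurableSpace Ω} (hm : m ≤ mΩ)
    {f g : Ω → ℝ} (hfs : StronglyMeasurable[m] f) (hfg : Integrable (f * g) P)
    (hg : Integrable g P) (hzero : f * P[g|m] =ᵐ[P] 0) :
    ∫ ω, f ω * g ω ∂P = 0 := by
  have hpull : P[f * g|m] =ᵐ[P] f * P[g|m] := condExp_mul_of_stronglyMeasurable_left hfs hfg hg
  calc ∫ ω, f ω * g ω ∂P = ∫ ω, (P[f * g|m]) ω ∂P := (integral_condExp hm).symm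
    _ = ∫ ω, (0 : Ω → ℝ) ω ∂P := integral_congr_ae (hpull.trans hzero)
    _ = 0 := by simp


/-- **mean-zero property of the efficient influence function φ(0,1)**:
with `τ₀₁ := E[δ₀(M,X) | G=1] = E[G·δ₀(M,X)]/p`, at the true nuisance functions
`E[(1−G)·(ϖ(M,X)/(1−ϖ(M,X)))·(ΔY − δ₀(M,X)) + G·(δ₀(M,X) − τ₀₁)] = 0`;
equivalently the efficient influence function
`φ(0,1) = (1−G)/p · ϖ(M,X)/(1−ϖ(M,X)) · (ΔY − δ₀(M,X)) + G/p · (δ₀(M,X) − τ₀₁)`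
has expectation zero. -/
theorem eif_tau01_mean_zero
    {Ω 𝓧 : Type*} [MeasurableSpace Ω] [MeasurableSpace 𝓧]
    (P : Measure Ω) [IsProbabilityMeasure P]
    (G : Ω → ℝ) (hGmeas : Measurable G) (hG01 : ∀ ω, G ω = 0 ∨ G ω = 1)
    (hp0 : 0 < P {ω | G ω = 1}) (hp1 : P {ω | G ω = 1} < 1)
    (X : Ω → 𝓧) (hXmeas : Measurable X)
    (M : Ω → ℝ) (hMmeas : Measurable M)
    (ΔY : Ω → ℝ) (hΔYint : Integrable ΔY P)
    -- ϖ(m,x), a jointly measurable version of P(G=1 ∣ M=m, X=x), with ϖ(M,X) ≤ 1−c a.s.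
    (ϖ : ℝ → 𝓧 → ℝ) (hϖmeas : Measurable (fun p : ℝ × 𝓧 => ϖ p.1 p.2))
    (hϖver : (fun ω => ϖ (M ω) (X ω)) =ᵐ[P]
      P[G | MeasurableSpace.comap (fun ω' => (M ω', X ω')) inferInstance])
    (c : ℝ) (hc : 0 < c) (hϖle : ∀ᵐ ω ∂P, ϖ (M ω) (X ω) ≤ 1 - c)
    -- δ₀(m,x), a version of E[ΔY ∣ G=0, M=m, X=x]
    (δ0 : ℝ → 𝓧 → ℝ) (hδ0meas : Measurable (fun p : ℝ × 𝓧 => δ0 p.1 p.2))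
    (hδ0ver : (fun ω => (1 - G ω) * δ0 (M ω) (X ω)) =ᵐ[P]
      fun ω => (1 - G ω) *
        (P[ΔY | MeasurableSpace.comap (fun ω' => (G ω', M ω', X ω')) inferInstance]) ω)
    (hδ0int : Integrable (fun ω => δ0 (M ω) (X ω)) P)
    -- all displayed expectations are finite
    (hφint : Integrable (fun ω =>
      (1 - G ω) * (ϖ (M ω) (X ω) / (1 - ϖ (M ω) (X ω))) * (ΔY ω - δ0 (M ω) (X ω))) P)
    -- τ₀₁ = E[δ₀(M,X) | G=1]
    (τ01 : ℝ)
    (hτ01 : τ01 = (∫ ω, G ω * δ0 (M ω) (X ω) ∂P) / (P {ω | G ω = 1}).toReal) :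
    ∫ ω, ((1 - G ω) * (ϖ (M ω) (X ω) / (1 - ϖ (M ω) (X ω))) * (ΔY ω - δ0 (M ω) (X ω))
      + G ω * (δ0 (M ω) (X ω) - τ01)) ∂P = 0 := by
  classical
  have hπ : Measurable (fun ω' => (G ω', M ω', X ω')) :=
    hGmeas.prodMk (hMmeas.prodMk hXmeas)
  have hm : MeasurableSpace.comap (fun ω' => (G ω', M ω', X ω'))
      (inferInstance : MeasurableSpace (ℝ × ℝ × 𝓧)) ≤ (inferInstance : MeasurableSpace Ω) :=
    measurable_iff_comap_le.mp hπ
  have hπm : Measurable[MeasurableSpace.comap (fun ω' => (G ω', M ω', X ω')) inferInstance]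
      (fun ω' => (G ω', M ω', X ω')) := Measurable.of_comap_le le_rfl
  have hϖ' : Measurable (fun p : ℝ × ℝ × 𝓧 => ϖ p.2.1 p.2.2) := hϖmeas.comp measurable_snd
  have hfs : StronglyMeasurable[MeasurableSpace.comap (fun ω' => (G ω', M ω', X ω')) inferInstance]
      (fun ω => (1 - G ω) * (ϖ (M ω) (X ω) / (1 - ϖ (M ω) (X ω)))) := by
    have hφ : Measurable (fun p : ℝ × ℝ × 𝓧 =>
        (1 - p.1) * (ϖ p.2.1 p.2.2 / (1 - ϖ p.2.1 p.2.2))) :=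
      (measurable_const.sub measurable_fst).mul (hϖ'.div (measurable_const.sub hϖ'))
    exact (hφ.comp hπm).stronglyMeasurable
  have hδ0s : StronglyMeasurable[MeasurableSpace.comap
      (fun ω' => (G ω', M ω', X ω')) inferInstance] (fun ω => δ0 (M ω) (X ω)) := by
    have hφ : Measurable (fun p : ℝ × ℝ × 𝓧 => δ0 p.2.1 p.2.2) := hδ0meas.comp measurable_snd
    exact (hφ.comp hπm).stronglyMeasurable
  have hg_int : Integrable (fun ω => ΔY ω - δ0 (M ω) (X ω)) P := hΔYint.sub hδ0int
  have hfg_int : Integrable ((fun ω => (1 - G ω) * (ϖ (M ω) (X ω) / (1 - ϖ (M ω) (X ω)))) *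
      (fun ω => ΔY ω - δ0 (M ω) (X ω))) P := hφint
  have hcond_sub : P[(fun ω => ΔY ω - δ0 (M ω) (X ω)) |
        MeasurableSpace.comap (fun ω' => (G ω', M ω', X ω')) inferInstance] =ᵐ[P]
      fun ω => (P[ΔY | MeasurableSpace.comap (fun ω' => (G ω', M ω', X ω')) inferInstance]) ω
        - δ0 (M ω) (X ω) := by
    have h1 := condExp_sub (μ := P)
      (m := MeasurableSpace.comap (fun ω' => (G ω', M ω', X ω')) inferInstance)
      (f := ΔY) (g := fun ω => δ0 (M ω) (X ω)) hΔYint hδ0int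
    have h2 : P[(fun ω => δ0 (M ω) (X ω)) |
          MeasurableSpace.comap (fun ω' => (G ω', M ω', X ω')) inferInstance]
        = fun ω => δ0 (M ω) (X ω) :=
      condExp_of_stronglyMeasurable hm hδ0s hδ0int
    filter_upwards [h1] with ω hω
    simp [h2] at hω
    exact hω
  have hzero : (fun ω => (1 - G ω) * (ϖ (M ω) (X ω) / (1 - ϖ (M ω) (X ω)))) *
      P[(fun ω => ΔY ω - δ0 (M ω) (X ω)) |
        MeasurableSpace.comap (fun ω' => (G ω', M ω', X ω')) inferInstance] =ᵐ[P] 0 := by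
    filter_upwards [hcond_sub, hδ0ver] with ω h1 h2
    simp only [Pi.mul_apply, Pi.zero_apply]
    rw [h1]
    have h3 : (1 - G ω) *
        ((P[ΔY | MeasurableSpace.comap (fun ω' => (G ω', M ω', X ω')) inferInstance]) ω
          - δ0 (M ω) (X ω)) = 0 := by
      have h2' := h2
      linear_combination -h2'
    linear_combination (ϖ (M ω) (X ω) / (1 - ϖ (M ω) (X ω))) * h3
  have hint1 : ∫ ω, (1 - G ω) * (ϖ (M ω) (X ω) / (1 - ϖ (M ω) (X ω)))
      * (ΔY ω - δ0 (M ω) (X ω)) ∂P = 0 :=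
    aux_int_zero P hm hfs hfg_int hg_int hzero
  -- second piece
  have hGbd : ∀ ω, ‖G ω‖ ≤ 1 := by
    intro ω; rcases hG01 ω with h | h <;> simp [h]
  have hGδint : Integrable (fun ω => G ω * δ0 (M ω) (X ω)) P :=
    hδ0int.bdd_mul hGmeas.aestronglyMeasurable (Filter.Eventually.of_forall hGbd)
  have hGint : Integrable G P :=
    (integrable_const (1 : ℝ)).mono' hGmeas.aestronglyMeasurable
      (Filter.Eventually.of_forall (by simpa using hGbd))
  have hG2int : Integrable (fun ω => G ω * (δ0 (M ω) (X ω) - τ01)) P := by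
    have he : (fun ω => G ω * (δ0 (M ω) (X ω) - τ01))
        = fun ω => G ω * δ0 (M ω) (X ω) - τ01 * G ω := by
      funext ω; ring
    rw [he]; exact hGδint.sub (hGint.const_mul τ01)
  have hGindic : ∫ ω, G ω ∂P = (P {ω | G ω = 1}).toReal := by
    have h := integral_indicator_one (μ := P) (hGmeas (measurableSet_singleton 1))
    have he : G = (G ⁻¹' {1}).indicator (1 : Ω → ℝ) := by
      funext ω
      rcases hG01 ω with h | h <;> simp [Set.indicator, h]
    conv_lhs => rw [he]
    exact h
  have hpne : (P {ω | G ω = 1}).toReal ≠ 0 :=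
    ne_of_gt (ENNReal.toReal_pos hp0.ne' (measure_ne_top P _))
  have hint2 : ∫ ω, G ω * (δ0 (M ω) (X ω) - τ01) ∂P = 0 := by
    have he : (fun ω => G ω * (δ0 (M ω) (X ω) - τ01))
        = fun ω => G ω * δ0 (M ω) (X ω) - τ01 * G ω := by
      funext ω; ring
    rw [he, integral_sub hGδint (hGint.const_mul τ01), integral_const_mul, hGindic, hτ01]
    field_simp
    ring
  rw [integral_add hφint hG2int, hint1, hint2, add_zero]
end

section
/- Population double-robustness identity for τ(0,0) (core of Theorem 3): let π̃ : 𝒳 → [c, 1−c] and ν̃ : 𝒳 → ℝ be measurable with all displayed expectations finite. If either π̃(X) = π(X) a.s. or ν̃(X) = ν₀(X) a.s., then E[ (1−G)·(π̃(X)/(1−π̃(X)))·(ΔY − ν̃(X)) + G·ν̃(X) ] = p·τ₀₀, where τ₀₀ := E[ν₀(X) | G=1]. -/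
open MeasureTheory

/-- Pull-out identity: for `m`-strongly-measurable `f` and integrable `g` with `f*g`
integrable, `∫ f·g = ∫ f·E[g|m]`. -/
lemma integral_mul_condexp_aux {Ω : Type*} {m : MeasurableSpace Ω} {m0 : MeasurableSpace Ω}
    (hm : m ≤ m0) (P : Measure Ω) [IsProbabilityMeasure P] (f g : Ω → ℝ)
    (hf : StronglyMeasurable[m] f) (hfg : Integrable (fun ω => f ω * g ω) P)
    (hg : Integrable g P) :
    ∫ ω, f ω * g ω ∂P = ∫ ω, f ω * (P[g|m]) ω ∂P := by
  have h1 : P[f * g|m] =ᵐ[P] f * P[g|m] :=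
    condExp_mul_of_stronglyMeasurable_left hf hfg hg
  have h2 : ∫ ω, (P[f * g|m]) ω ∂P = ∫ ω, f ω * g ω ∂P := integral_condExp hm
  rw [← h2]
  exact integral_congr_ae h1

/-- **population double-robustness identity for τ(0,0)**: for measurable
working models `π̃ : 𝓧 → [c,1−c]` and `ν̃ : 𝓧 → ℝ`, if either `π̃(X) = π(X)` a.s. or
`ν̃(X) = ν₀(X)` a.s., then
`E[(1−G)·(π̃(X)/(1−π̃(X)))·(ΔY − ν̃(X)) + G·ν̃(X)] = p·τ₀₀`,
where `τ₀₀ := E[ν₀(X) | G=1]`. -/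
theorem double_robustness_tau00
    {Ω 𝓧 : Type*} [MeasurableSpace Ω] [MeasurableSpace 𝓧]
    (P : Measure Ω) [IsProbabilityMeasure P]
    (G : Ω → ℝ) (hGmeas : Measurable G) (hG01 : ∀ ω, G ω = 0 ∨ G ω = 1)
    (hp0 : 0 < P {ω | G ω = 1}) (hp1 : P {ω | G ω = 1} < 1)
    (X : Ω → 𝓧) (hXmeas : Measurable X)
    (ΔY : Ω → ℝ) (hΔYint : Integrable ΔY P)
    -- π(x), a measurable version of P(G=1 ∣ X=x), with π(X) ≤ 1−c a.s.
    (π : 𝓧 → ℝ) (hπmeas : Measurable π)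
    (hπver : (fun ω => π (X ω)) =ᵐ[P] P[G | MeasurableSpace.comap X inferInstance])
    (c : ℝ) (hc : 0 < c) (hπle : ∀ᵐ ω ∂P, π (X ω) ≤ 1 - c)
    -- ν₀(x), a version of E[ΔY ∣ G=0, X=x]
    (ν0 : 𝓧 → ℝ) (hν0meas : Measurable ν0)
    (hν0ver : (fun ω => (1 - G ω) * ν0 (X ω)) =ᵐ[P]
      fun ω => (1 - G ω) *
        (P[ΔY | MeasurableSpace.comap (fun ω' => (G ω', X ω')) inferInstance]) ω)
    (hν0int : Integrable (fun ω => ν0 (X ω)) P)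
    -- working models π̃ and ν̃
    (πt : 𝓧 → ℝ) (hπtmeas : Measurable πt)
    (hπtrange : ∀ x, πt x ∈ Set.Icc c (1 - c))
    (νt : 𝓧 → ℝ) (hνtmeas : Measurable νt)
    (hνtint : Integrable (fun ω => νt (X ω)) P)
    -- all displayed expectations are finite
    (hφint : Integrable (fun ω =>
      (1 - G ω) * (πt (X ω) / (1 - πt (X ω))) * (ΔY ω - νt (X ω))) P)
    -- at least one working model is correct
    (hrobust : (∀ᵐ ω ∂P, πt (X ω) = π (X ω)) ∨ (∀ᵐ ω ∂P, νt (X ω) = ν0 (X ω))) :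
    ∫ ω, ((1 - G ω) * (πt (X ω) / (1 - πt (X ω))) * (ΔY ω - νt (X ω))
        + G ω * νt (X ω)) ∂P
      = (P {ω | G ω = 1}).toReal *
        ((∫ ω, G ω * ν0 (X ω) ∂P) / (P {ω | G ω = 1}).toReal) := by
  classical
  have hm2 : MeasurableSpace.comap X inferInstance ≤ ‹MeasurableSpace Ω› :=
    hXmeas.comap_le
  have hm1 : MeasurableSpace.comap (fun ω' => (G ω', X ω')) inferInstance
      ≤ ‹MeasurableSpace Ω› := (hGmeas.prodMk hXmeas).comap_le
  have hXm2 : Measurable[MeasurableSpace.comap X inferInstance] X :=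
    Measurable.of_comap_le le_rfl
  have hGXm1 : Measurable[MeasurableSpace.comap (fun ω' => (G ω', X ω')) inferInstance]
      (fun ω => (G ω, X ω)) := Measurable.of_comap_le le_rfl
  set w : 𝓧 → ℝ := fun x => πt x / (1 - πt x) with hwdef
  have hwmeas : Measurable w := hπtmeas.div (measurable_const.sub hπtmeas)
  -- bounds
  have hπt1 : ∀ x, 0 < 1 - πt x := fun x => lt_of_lt_of_le hc (by
    have := (hπtrange x).2; linarith)
  obtain ⟨ω₀, -⟩ := nonempty_of_measure_ne_zero hp0.ne'
  have h1cpos : 0 < 1 - c := by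
    have h1 := (hπtrange (X ω₀)).1
    have h2 := (hπtrange (X ω₀)).2
    linarith
  have hwbd : ∀ x, ‖w x‖ ≤ (1 - c) / c := by
    intro x
    have h1 := (hπtrange x).1
    have h2 := (hπtrange x).2
    rw [Real.norm_eq_abs, hwdef, abs_div]
    have hπabs : |πt x| ≤ 1 - c := abs_le.mpr ⟨by linarith, h2⟩
    have hdenom : c ≤ |1 - πt x| := by rw [abs_of_pos (hπt1 x)]; linarith
    exact div_le_div₀ h1cpos.le hπabs hc hdenom
  have hGbd : ∀ ω, ‖G ω‖ ≤ 1 := fun ω => by rcases hG01 ω with h | h <;> simp [h]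
  have h1Gbd : ∀ ω, ‖1 - G ω‖ ≤ 1 := fun ω => by rcases hG01 ω with h | h <;> simp [h]
  set f1 : Ω → ℝ := fun ω => (1 - G ω) * w (X ω) with hf1def
  have hf1bd : ∀ ω, ‖f1 ω‖ ≤ 1 * ((1 - c) / c) := fun ω => by
    rw [hf1def, norm_mul]
    exact mul_le_mul (h1Gbd ω) (hwbd (X ω)) (norm_nonneg _) zero_le_one
  have hf1meas : Measurable f1 :=
    (measurable_const.sub hGmeas).mul (hwmeas.comp hXmeas)
  have hf1m1 : StronglyMeasurable[MeasurableSpace.comap (fun ω' => (G ω', X ω'))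
      inferInstance] f1 := by
    have hGm1 := (measurable_fst.comp hGXm1)
    have hXm1 := (measurable_snd.comp hGXm1)
    exact ((measurable_const.sub hGm1).mul (hwmeas.comp hXm1)).stronglyMeasurable
  -- integrability facts
  have hint1 : Integrable (fun ω => f1 ω * ΔY ω) P :=
    hΔYint.bdd_mul hf1meas.aestronglyMeasurable (Filter.Eventually.of_forall hf1bd)
  have hint2 : Integrable (fun ω => f1 ω * νt (X ω)) P :=
    hνtint.bdd_mul hf1meas.aestronglyMeasurable (Filter.Eventually.of_forall hf1bd)
  have hint5 : Integrable (fun ω => f1 ω * ν0 (X ω)) P :=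
    hν0int.bdd_mul hf1meas.aestronglyMeasurable (Filter.Eventually.of_forall hf1bd)
  have hint3 : Integrable (fun ω => G ω * νt (X ω)) P :=
    hνtint.bdd_mul hGmeas.aestronglyMeasurable (Filter.Eventually.of_forall hGbd)
  have hint4 : Integrable (fun ω => G ω * ν0 (X ω)) P :=
    hν0int.bdd_mul hGmeas.aestronglyMeasurable (Filter.Eventually.of_forall hGbd)
  -- Step A : ∫ f1·ΔY = ∫ f1·ν0(X)
  have hstepA : ∫ ω, f1 ω * ΔY ω ∂P = ∫ ω, f1 ω * ν0 (X ω) ∂P := by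
    rw [integral_mul_condexp_aux hm1 P f1 ΔY hf1m1 hint1 hΔYint]
    refine integral_congr_ae ?_
    filter_upwards [hν0ver] with ω hω
    simp only [hf1def]
    linear_combination (-(w (X ω))) * hω
  -- split the left-hand side
  have hsplit : ∫ ω, ((1 - G ω) * (πt (X ω) / (1 - πt (X ω))) * (ΔY ω - νt (X ω))
      + G ω * νt (X ω)) ∂P
      = ∫ ω, (f1 ω * ΔY ω - f1 ω * νt (X ω) + G ω * νt (X ω)) ∂P :=
    integral_congr_ae (Filter.Eventually.of_forall fun ω => by
      simp only [hf1def, hwdef]; ring)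
  have hint12 : Integrable (fun ω => f1 ω * ΔY ω - f1 ω * νt (X ω)) P := hint1.sub hint2
  have hadd : ∫ ω, (f1 ω * ΔY ω - f1 ω * νt (X ω) + G ω * νt (X ω)) ∂P
      = (∫ ω, (f1 ω * ΔY ω - f1 ω * νt (X ω)) ∂P) + ∫ ω, G ω * νt (X ω) ∂P :=
    integral_add hint12 hint3
  have hsub : ∫ ω, (f1 ω * ΔY ω - f1 ω * νt (X ω)) ∂P
      = (∫ ω, f1 ω * ΔY ω ∂P) - ∫ ω, f1 ω * νt (X ω) ∂P := integral_sub hint1 hint2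
  rw [hsplit, hadd, hsub, hstepA]
  -- simplify the right-hand side
  have hpne : (P {ω | G ω = 1}).toReal ≠ 0 :=
    (ENNReal.toReal_pos hp0.ne' (measure_ne_top _ _)).ne'
  rw [mul_comm ((P {ω | G ω = 1}).toReal), div_mul_cancel₀ _ hpne]
  -- remaining goal : ∫ f1 ν0 − ∫ f1 νt + ∫ G νt = ∫ G ν0
  rcases hrobust with hcase | hcase
  · -- π̃ correct
    set g : Ω → ℝ := fun ω => ν0 (X ω) - νt (X ω) with hgdef
    set h : Ω → ℝ := fun ω => w (X ω) * g ω with hhdef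
    have hgint : Integrable g P := hν0int.sub hνtint
    have hhint : Integrable h P :=
      hgint.bdd_mul (hwmeas.comp hXmeas).aestronglyMeasurable (Filter.Eventually.of_forall fun ω => hwbd (X ω))
    have hgmeas : Measurable g := (hν0meas.comp hXmeas).sub (hνtmeas.comp hXmeas)
    have hhm2 : StronglyMeasurable[MeasurableSpace.comap X inferInstance] h :=
      ((hwmeas.comp hXm2).mul
        ((hν0meas.comp hXm2).sub (hνtmeas.comp hXm2))).stronglyMeasurable
    have hgm2 : StronglyMeasurable[MeasurableSpace.comap X inferInstance] g :=
      ((hν0meas.comp hXm2).sub (hνtmeas.comp hXm2)).stronglyMeasurable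
    have hGint : Integrable G P :=
      (integrable_const (1 : ℝ)).bdd_mul hGmeas.aestronglyMeasurable
        (Filter.Eventually.of_forall (fun ω => hGbd ω)) |>.congr
        (Filter.Eventually.of_forall (fun ω => by simp))
    have hhGint : Integrable (fun ω => h ω * G ω) P := by
      have := hhint.bdd_mul hGmeas.aestronglyMeasurable (Filter.Eventually.of_forall hGbd)
      exact this.congr (Filter.Eventually.of_forall (fun ω => by exact mul_comm _ _))
    have hgGint : Integrable (fun ω => g ω * G ω) P := by
      have := hgint.bdd_mul hGmeas.aestronglyMeasurable (Filter.Eventually.of_forall hGbd)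
      exact this.congr (Filter.Eventually.of_forall (fun ω => by exact mul_comm _ _))
    -- pull-out with m2
    have eh : ∫ ω, h ω * G ω ∂P
        = ∫ ω, h ω * (P[G|MeasurableSpace.comap X inferInstance]) ω ∂P :=
      integral_mul_condexp_aux hm2 P h G hhm2 hhGint hGint
    have eg : ∫ ω, g ω * G ω ∂P
        = ∫ ω, g ω * (P[G|MeasurableSpace.comap X inferInstance]) ω ∂P :=
      integral_mul_condexp_aux hm2 P g G hgm2 hgGint hGint
    -- key identity : ∫ f1·g = ∫ G·g
    have key : ∫ ω, f1 ω * g ω ∂P = ∫ ω, G ω * g ω ∂P := by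
      have e0 : ∫ ω, f1 ω * g ω ∂P = ∫ ω, h ω ∂P - ∫ ω, h ω * G ω ∂P := by
        rw [← integral_sub hhint hhGint]
        refine integral_congr_ae (Filter.Eventually.of_forall fun ω => ?_)
        simp only [hf1def, hhdef]; ring
      rw [e0, eh]
      have e1 : ∫ ω, G ω * g ω ∂P = ∫ ω, g ω * G ω ∂P :=
        integral_congr_ae (Filter.Eventually.of_forall fun ω => mul_comm _ _)
      rw [e1, eg]
      -- now both sides in terms of P[G|m2]; use πt(X) = π(X) =ᵐ P[G|m2]
      set E : Ω → ℝ := P[G|MeasurableSpace.comap X inferInstance] with hEdef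
      have hEmeas : AEStronglyMeasurable E P :=
        (stronglyMeasurable_condExp.mono hm2).aestronglyMeasurable
      have hGnn : 0 ≤ᵐ[P] G := Filter.Eventually.of_forall fun ω => by
        rcases hG01 ω with h' | h' <;> simp [h']
      have hEnn : 0 ≤ᵐ[P] E := condExp_nonneg hGnn
      have hEbd : ∀ᵐ ω ∂P, ‖E ω‖ ≤ 1 - c := by
        filter_upwards [hEnn, hπver, hπle] with ω h1 h2 h3
        rw [Real.norm_eq_abs, abs_of_nonneg h1, ← h2]
        exact h3
      have hintHE : Integrable (fun ω => h ω * E ω) P := by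
        have := Integrable.bdd_mul (c := 1 - c) hhint hEmeas hEbd
        exact this.congr (Filter.Eventually.of_forall fun ω => by exact mul_comm _ _)
      rw [← integral_sub hhint hintHE]
      refine integral_congr_ae ?_
      filter_upwards [hπver, hcase] with ω h1 h2
      have hne : (1 - πt (X ω)) ≠ 0 := (hπt1 (X ω)).ne'
      show h ω - h ω * E ω = g ω * E ω
      rw [← h1, ← h2]
      show πt (X ω) / (1 - πt (X ω)) * g ω
          - πt (X ω) / (1 - πt (X ω)) * g ω * πt (X ω) = g ω * πt (X ω)
      field_simp
    -- conclude
    have s1 : ∫ ω, f1 ω * g ω ∂P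
        = ∫ ω, f1 ω * ν0 (X ω) ∂P - ∫ ω, f1 ω * νt (X ω) ∂P := by
      rw [← integral_sub hint5 hint2]
      exact integral_congr_ae (Filter.Eventually.of_forall fun ω => by
        simp only [hgdef]; ring)
    have s2 : ∫ ω, G ω * g ω ∂P
        = ∫ ω, G ω * ν0 (X ω) ∂P - ∫ ω, G ω * νt (X ω) ∂P := by
      rw [← integral_sub hint4 hint3]
      exact integral_congr_ae (Filter.Eventually.of_forall fun ω => by
        simp only [hgdef]; ring)
    have := key
    rw [s1, s2] at this
    linarith
  · -- ν̃ correct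
    have e1 : ∫ ω, f1 ω * νt (X ω) ∂P = ∫ ω, f1 ω * ν0 (X ω) ∂P :=
      integral_congr_ae (by filter_upwards [hcase] with ω hω; rw [hω])
    have e2 : ∫ ω, G ω * νt (X ω) ∂P = ∫ ω, G ω * ν0 (X ω) ∂P :=
      integral_congr_ae (by filter_upwards [hcase] with ω hω; rw [hω])
    rw [e1, e2]; ring
end

section
/- Population double-robustness identity for τ(0,1) (core of Theorem 3): let ϖ̃ : ℝ×𝒳 → [c, 1−c] and δ̃ : ℝ×𝒳 → ℝ be jointly measurable with all displayed expectations finite. If either ϖ̃(M,X) = ϖ(M,X) a.s. or δ̃(M,X) = δ₀(M,X) a.s., then E[ (1−G)·(ϖ̃(M,X)/(1−ϖ̃(M,X)))·(ΔY − δ̃(M,X)) + G·δ̃(M,X) ] = p·τ₀₁, where τ₀₁ := E[δ₀(M,X) | G=1]. -/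
open MeasureTheory

/-- Helper: for an `m`-strongly measurable `f` and integrable `Y` with `f*Y` integrable,
`∫ f·Y = ∫ f·E[Y|m]`. -/
lemma integral_mul_eq_integral_mul_condexp {Ω : Type*} {m m0 : MeasurableSpace Ω} (hm : m ≤ m0)
    (P : Measure Ω) [IsFiniteMeasure P] {f Y : Ω → ℝ}
    (hf : StronglyMeasurable[m] f) (hY : Integrable Y P)
    (hfY : Integrable (fun ω => f ω * Y ω) P) :
    ∫ ω, f ω * Y ω ∂P = ∫ ω, f ω * (P[Y|m]) ω ∂P := by
  have h1 : P[(fun ω => f ω * Y ω)|m] =ᵐ[P] fun ω => f ω * (P[Y|m]) ω :=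
    condExp_mul_of_stronglyMeasurable_left hf hfY hY
  calc ∫ ω, f ω * Y ω ∂P
      = ∫ ω, (P[(fun ω => f ω * Y ω)|m]) ω ∂P := (integral_condExp hm).symm
    _ = ∫ ω, f ω * (P[Y|m]) ω ∂P := integral_congr_ae h1

/-- **population double-robustness identity for τ(0,1)**: for jointly
measurable working models `ϖ̃ : ℝ×𝓧 → [c,1−c]` and `δ̃ : ℝ×𝓧 → ℝ`, if either
`ϖ̃(M,X) = ϖ(M,X)` a.s. or `δ̃(M,X) = δ₀(M,X)` a.s., then
`E[(1−G)·(ϖ̃(M,X)/(1−ϖ̃(M,X)))·(ΔY − δ̃(M,X)) + G·δ̃(M,X)] = p·τ₀₁`,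
where `τ₀₁ := E[δ₀(M,X) | G=1]`. -/
theorem double_robustness_tau01
    {Ω 𝓧 : Type*} [MeasurableSpace Ω] [MeasurableSpace 𝓧]
    (P : Measure Ω) [IsProbabilityMeasure P]
    (G : Ω → ℝ) (hGmeas : Measurable G) (hG01 : ∀ ω, G ω = 0 ∨ G ω = 1)
    (hp0 : 0 < P {ω | G ω = 1}) (hp1 : P {ω | G ω = 1} < 1)
    (X : Ω → 𝓧) (hXmeas : Measurable X)
    (M : Ω → ℝ) (hMmeas : Measurable M)
    (ΔY : Ω → ℝ) (hΔYint : Integrable ΔY P)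
    -- ϖ(m,x), a jointly measurable version of P(G=1 ∣ M=m, X=x), with ϖ(M,X) ≤ 1−c a.s.
    (ϖ : ℝ → 𝓧 → ℝ) (hϖmeas : Measurable (fun p : ℝ × 𝓧 => ϖ p.1 p.2))
    (hϖver : (fun ω => ϖ (M ω) (X ω)) =ᵐ[P]
      P[G | MeasurableSpace.comap (fun ω' => (M ω', X ω')) inferInstance])
    (c : ℝ) (hc : 0 < c) (hϖle : ∀ᵐ ω ∂P, ϖ (M ω) (X ω) ≤ 1 - c)
    -- δ₀(m,x), a version of E[ΔY ∣ G=0, M=m, X=x]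
    (δ0 : ℝ → 𝓧 → ℝ) (hδ0meas : Measurable (fun p : ℝ × 𝓧 => δ0 p.1 p.2))
    (hδ0ver : (fun ω => (1 - G ω) * δ0 (M ω) (X ω)) =ᵐ[P]
      fun ω => (1 - G ω) *
        (P[ΔY | MeasurableSpace.comap (fun ω' => (G ω', M ω', X ω')) inferInstance]) ω)
    (hδ0int : Integrable (fun ω => δ0 (M ω) (X ω)) P)
    -- working models ϖ̃ and δ̃
    (ϖt : ℝ → 𝓧 → ℝ) (hϖtmeas : Measurable (fun p : ℝ × 𝓧 => ϖt p.1 p.2))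
    (hϖtrange : ∀ m x, ϖt m x ∈ Set.Icc c (1 - c))
    (δt : ℝ → 𝓧 → ℝ) (hδtmeas : Measurable (fun p : ℝ × 𝓧 => δt p.1 p.2))
    (hδtint : Integrable (fun ω => δt (M ω) (X ω)) P)
    -- all displayed expectations are finite
    (hφint : Integrable (fun ω =>
      (1 - G ω) * (ϖt (M ω) (X ω) / (1 - ϖt (M ω) (X ω))) * (ΔY ω - δt (M ω) (X ω))) P)
    -- at least one working model is correct
    (hrobust : (∀ᵐ ω ∂P, ϖt (M ω) (X ω) = ϖ (M ω) (X ω)) ∨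
      (∀ᵐ ω ∂P, δt (M ω) (X ω) = δ0 (M ω) (X ω))) :
    ∫ ω, ((1 - G ω) * (ϖt (M ω) (X ω) / (1 - ϖt (M ω) (X ω))) * (ΔY ω - δt (M ω) (X ω))
        + G ω * δt (M ω) (X ω)) ∂P
      = (P {ω | G ω = 1}).toReal *
        ((∫ ω, G ω * δ0 (M ω) (X ω) ∂P) / (P {ω | G ω = 1}).toReal) := by
  -- shorthand for composed functions
  set rt : Ω → ℝ := fun ω => ϖt (M ω) (X ω) / (1 - ϖt (M ω) (X ω)) with hrtdef
  set pt : Ω → ℝ := fun ω => ϖt (M ω) (X ω) with hptdef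
  set dt : Ω → ℝ := fun ω => δt (M ω) (X ω) with hdtdef
  set d0 : Ω → ℝ := fun ω => δ0 (M ω) (X ω) with hd0def
  -- basic bounds
  have hG01' : ∀ ω, ‖G ω‖ ≤ 1 := by
    intro ω; rcases hG01 ω with h | h <;> simp [h]
  have h1G01 : ∀ ω, ‖1 - G ω‖ ≤ 1 := by
    intro ω; rcases hG01 ω with h | h <;> simp [h]
  have hptmem : ∀ ω, pt ω ∈ Set.Icc c (1 - c) := fun ω => hϖtrange (M ω) (X ω)
  have h1pt : ∀ ω, c ≤ 1 - pt ω := fun ω => by have := (hptmem ω).2; linarith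
  have hrt_nonneg : ∀ ω, 0 ≤ rt ω := fun ω =>
    div_nonneg (le_trans hc.le (hptmem ω).1) (le_trans hc.le (h1pt ω))
  have hrt_bdd : ∀ ω, ‖rt ω‖ ≤ (1 - c) / c := by
    intro ω
    rw [Real.norm_eq_abs, abs_of_nonneg (hrt_nonneg ω)]
    exact div_le_div₀
      (by have h1 := (hptmem ω).1; have h2 := (hptmem ω).2; linarith)
      (hptmem ω).2 hc (h1pt ω)
  have hf1_bdd : ∀ ω, ‖(1 - G ω) * rt ω‖ ≤ (1 - c) / c := by
    intro ω
    rw [norm_mul]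
    calc ‖1 - G ω‖ * ‖rt ω‖ ≤ 1 * ((1 - c) / c) :=
          mul_le_mul (h1G01 ω) (hrt_bdd ω) (norm_nonneg _) zero_le_one
      _ = (1 - c) / c := one_mul _
  have hpt_bdd : ∀ ω, ‖pt ω‖ ≤ 1 := by
    intro ω
    have h1 := (hptmem ω).1; have h2 := (hptmem ω).2
    rw [Real.norm_eq_abs, abs_of_nonneg (le_trans hc.le h1)]; linarith
  -- ambient measurability
  have hpt_meas : Measurable pt := hϖtmeas.comp (hMmeas.prodMk hXmeas)
  have hrt_meas : Measurable rt := hpt_meas.div (measurable_const.sub hpt_meas)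
  have hdt_meas : Measurable dt := hδtmeas.comp (hMmeas.prodMk hXmeas)
  have hd0_meas : Measurable d0 := hδ0meas.comp (hMmeas.prodMk hXmeas)
  -- integrability
  have hGint : Integrable G P :=
    Integrable.mono' (integrable_const 1) hGmeas.aestronglyMeasurable
      (Filter.Eventually.of_forall hG01')
  have h1Gint : Integrable (fun ω => 1 - G ω) P := (integrable_const 1).sub hGint
  have hA : Integrable (fun ω => (1 - G ω) * rt ω * ΔY ω) P :=
    hΔYint.bdd_mul ((measurable_const.sub hGmeas).mul hrt_meas).aestronglyMeasurable
      (Filter.Eventually.of_forall hf1_bdd)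
  have hB : Integrable (fun ω => (1 - G ω) * rt ω * dt ω) P :=
    hδtint.bdd_mul ((measurable_const.sub hGmeas).mul hrt_meas).aestronglyMeasurable
      (Filter.Eventually.of_forall hf1_bdd)
  have hB0 : Integrable (fun ω => (1 - G ω) * rt ω * d0 ω) P :=
    hδ0int.bdd_mul ((measurable_const.sub hGmeas).mul hrt_meas).aestronglyMeasurable
      (Filter.Eventually.of_forall hf1_bdd)
  have hC : Integrable (fun ω => G ω * dt ω) P :=
    hδtint.bdd_mul hGmeas.aestronglyMeasurable (Filter.Eventually.of_forall hG01')
  have hD : Integrable (fun ω => G ω * d0 ω) P :=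
    hδ0int.bdd_mul hGmeas.aestronglyMeasurable (Filter.Eventually.of_forall hG01')
  have hptd0 : Integrable (fun ω => pt ω * d0 ω) P :=
    hδ0int.bdd_mul hpt_meas.aestronglyMeasurable (Filter.Eventually.of_forall hpt_bdd)
  have hptdt : Integrable (fun ω => pt ω * dt ω) P :=
    hδtint.bdd_mul hpt_meas.aestronglyMeasurable (Filter.Eventually.of_forall hpt_bdd)
  have hE3int : Integrable (fun ω => rt ω * (d0 ω - dt ω) * (1 - G ω)) P :=
    ((hB0.sub hB).congr (Filter.Eventually.of_forall fun ω => by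
      simp only [Pi.sub_apply]; ring))
  -- sub-σ-algebra inequalities (stated before introducing the abbreviations)
  have hm2 : MeasurableSpace.comap (fun ω' => (M ω', X ω')) inferInstance ≤ _ :=
    (hMmeas.prodMk hXmeas).comap_le
  have hm3 : MeasurableSpace.comap (fun ω' => (G ω', M ω', X ω')) inferInstance ≤ _ :=
    (hGmeas.prodMk (hMmeas.prodMk hXmeas)).comap_le
  -- RHS simplification
  have hptop : (P {ω | G ω = 1}).toReal ≠ 0 :=
    ENNReal.toReal_ne_zero.mpr ⟨hp0.ne', measure_ne_top _ _⟩
  rw [mul_comm ((P {ω | G ω = 1}).toReal), div_mul_cancel₀ _ hptop]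
  -- split the LHS integral
  have hsplit : ∫ ω, ((1 - G ω) * rt ω * (ΔY ω - dt ω) + G ω * dt ω) ∂P
      = (∫ ω, (1 - G ω) * rt ω * ΔY ω ∂P) - (∫ ω, (1 - G ω) * rt ω * dt ω ∂P)
        + ∫ ω, G ω * dt ω ∂P := by
    have hAB : Integrable (fun ω => (1 - G ω) * rt ω * ΔY ω
        - (1 - G ω) * rt ω * dt ω) P := hA.sub hB
    rw [← integral_sub hA hB, ← integral_add hAB hC]
    exact integral_congr_ae (Filter.Eventually.of_forall fun ω => by
      simp only [Pi.sub_apply]; ring)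
  rw [show (fun ω => (1 - G ω) * (ϖt (M ω) (X ω) / (1 - ϖt (M ω) (X ω)))
      * (ΔY ω - δt (M ω) (X ω)) + G ω * δt (M ω) (X ω))
      = fun ω => (1 - G ω) * rt ω * (ΔY ω - dt ω) + G ω * dt ω from rfl, hsplit]
  -- introduce names for the sub-σ-algebras (after all ambient-instance inference)
  set m2 : MeasurableSpace Ω :=
    MeasurableSpace.comap (fun ω' => (M ω', X ω')) inferInstance with hm2def
  set m3 : MeasurableSpace Ω :=
    MeasurableSpace.comap (fun ω' => (G ω', M ω', X ω')) inferInstance with hm3def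
  have hpair2 : Measurable[m2] (fun ω => (M ω, X ω)) := Measurable.of_comap_le le_rfl
  have hpair3 : Measurable[m3] (fun ω => (G ω, M ω, X ω)) := Measurable.of_comap_le le_rfl
  have hGm3 : Measurable[m3] G := measurable_fst.comp hpair3
  have hMX3 : Measurable[m3] (fun ω => (M ω, X ω)) := measurable_snd.comp hpair3
  have hpt2 : Measurable[m2] pt := hϖtmeas.comp hpair2
  have hrt2 : Measurable[m2] rt := hpt2.div (measurable_const.sub hpt2)
  have hdt2 : Measurable[m2] dt := hδtmeas.comp hpair2
  have hd02 : Measurable[m2] d0 := hδ0meas.comp hpair2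
  have hpt3 : Measurable[m3] pt := hϖtmeas.comp hMX3
  have hrt3 : Measurable[m3] rt := hpt3.div (measurable_const.sub hpt3)
  -- Tower step (m3): ∫ (1-G)·rt·ΔY = ∫ (1-G)·rt·δ0
  have hf1sm : StronglyMeasurable[m3] (fun ω => (1 - G ω) * rt ω) :=
    ((measurable_const.sub hGm3).mul hrt3).stronglyMeasurable
  have hT1 : ∫ ω, (1 - G ω) * rt ω * ΔY ω ∂P = ∫ ω, (1 - G ω) * rt ω * d0 ω ∂P := by
    have h := integral_mul_eq_integral_mul_condexp hm3 P
      (f := fun ω => (1 - G ω) * rt ω) (Y := ΔY) hf1sm hΔYint hA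
    rw [h]
    refine integral_congr_ae ?_
    filter_upwards [hδ0ver] with ω hω
    have hω' : (1 - G ω) * d0 ω = (1 - G ω) * (P[ΔY|m3]) ω := hω
    linear_combination rt ω * hω'.symm
  rw [hT1]
  rcases hrobust with hϖeq | hδeq
  · -- propensity model correct
    have hϖeq' : (fun ω => ϖt (M ω) (X ω)) =ᵐ[P] (fun ω => ϖ (M ω) (X ω)) := hϖeq
    have hcondG : P[G|m2] =ᵐ[P] pt := hϖver.symm.trans hϖeq'.symm
    have hcond1G : P[(fun ω => 1 - G ω)|m2] =ᵐ[P] fun ω => 1 - pt ω := by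
      have hsub : P[(fun ω => 1 - G ω)|m2] =ᵐ[P]
          P[(fun _ => (1 : ℝ))|m2] - P[G|m2] := condExp_sub (integrable_const 1) hGint m2
      have hcst : P[(fun _ => (1 : ℝ))|m2] = fun _ => (1 : ℝ) := condExp_const hm2 1
      filter_upwards [hsub, hcondG] with ω h1 h2
      rw [h1]
      simp only [Pi.sub_apply, hcst, h2]
    -- E3 : ∫ (1-G)·rt·d0 − ∫ (1-G)·rt·dt = ∫ pt·(d0 − dt)
    have hE3 : ∫ ω, (1 - G ω) * rt ω * d0 ω ∂P - ∫ ω, (1 - G ω) * rt ω * dt ω ∂P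
        = ∫ ω, pt ω * (d0 ω - dt ω) ∂P := by
      rw [← integral_sub hB0 hB]
      have step1 : ∫ ω, ((1 - G ω) * rt ω * d0 ω - (1 - G ω) * rt ω * dt ω) ∂P
          = ∫ ω, (rt ω * (d0 ω - dt ω)) * (1 - G ω) ∂P :=
        integral_congr_ae (Filter.Eventually.of_forall fun ω => by ring)
      rw [step1]
      have h := integral_mul_eq_integral_mul_condexp hm2 P
        (f := fun ω => rt ω * (d0 ω - dt ω)) (Y := fun ω => 1 - G ω)
        ((hrt2.mul (hd02.sub hdt2)).stronglyMeasurable) h1Gint hE3int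
      rw [h]
      refine integral_congr_ae ?_
      filter_upwards [hcond1G] with ω hω
      rw [hω]
      have hne : (1 : ℝ) - ϖt (M ω) (X ω) ≠ 0 := by
        have h1 := h1pt ω
        simp only [hptdef] at h1
        have : (0 : ℝ) < 1 - ϖt (M ω) (X ω) := lt_of_lt_of_le hc h1
        exact this.ne'
      simp only [hrtdef, hptdef]
      field_simp
    -- E1 : ∫ G·dt = ∫ pt·dt, E2 : ∫ G·d0 = ∫ pt·d0
    have hE1 : ∫ ω, G ω * dt ω ∂P = ∫ ω, pt ω * dt ω ∂P := by
      have h := integral_mul_eq_integral_mul_condexp hm2 P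
        (f := dt) (Y := G) hdt2.stronglyMeasurable hGint
        (hC.congr (Filter.Eventually.of_forall fun ω => by ring))
      calc ∫ ω, G ω * dt ω ∂P = ∫ ω, dt ω * G ω ∂P :=
            integral_congr_ae (Filter.Eventually.of_forall fun ω => by ring)
        _ = ∫ ω, dt ω * (P[G|m2]) ω ∂P := h
        _ = ∫ ω, pt ω * dt ω ∂P := by
            refine integral_congr_ae ?_
            filter_upwards [hcondG] with ω hω; rw [hω]; ring
    have hE2 : ∫ ω, G ω * d0 ω ∂P = ∫ ω, pt ω * d0 ω ∂P := by
      have h := integral_mul_eq_integral_mul_condexp hm2 P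
        (f := d0) (Y := G) hd02.stronglyMeasurable hGint
        (hD.congr (Filter.Eventually.of_forall fun ω => by ring))
      calc ∫ ω, G ω * d0 ω ∂P = ∫ ω, d0 ω * G ω ∂P :=
            integral_congr_ae (Filter.Eventually.of_forall fun ω => by ring)
        _ = ∫ ω, d0 ω * (P[G|m2]) ω ∂P := h
        _ = ∫ ω, pt ω * d0 ω ∂P := by
            refine integral_congr_ae ?_
            filter_upwards [hcondG] with ω hω; rw [hω]; ring
    -- assemble
    rw [hE3, hE1, hE2]
    rw [show ∫ ω, pt ω * (d0 ω - dt ω) ∂P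
        = ∫ ω, pt ω * d0 ω ∂P - ∫ ω, pt ω * dt ω ∂P from by
      rw [← integral_sub hptd0 hptdt]
      exact integral_congr_ae (Filter.Eventually.of_forall fun ω => by ring)]
    ring
  · -- outcome model correct
    have hBeq : ∫ ω, (1 - G ω) * rt ω * dt ω ∂P = ∫ ω, (1 - G ω) * rt ω * d0 ω ∂P := by
      refine integral_congr_ae ?_
      filter_upwards [hδeq] with ω hω
      simp only [hdtdef, hd0def, hω]
    have hCeq : ∫ ω, G ω * dt ω ∂P = ∫ ω, G ω * d0 ω ∂P := by
      refine integral_congr_ae ?_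
      filter_upwards [hδeq] with ω hω
      simp only [hdtdef, hd0def, hω]
    rw [hBeq, hCeq]
    ring
end

section
/- Population double-robustness identity for the controlled mean trend with a discrete mediator (core of Theorem 6, discrete case): fix g ∈ {0,1} and m ∈ S, and let π̃ : 𝒳 → (0,1], w̃ : S×𝒳 → [c,1] and δ̃ : S×𝒳 → ℝ be measurable with all displayed expectations finite. If either δ̃(m,X) = δ_g(m,X) a.s., or (π̃(X) = π(X) a.s. and w̃(m,X) = w(m,X) a.s.), then E[ 1{G=g}·1{M=m}·(π̃(X)/w̃(m,X))·(ΔY − δ̃(m,X)) + G·δ̃(m,X) ] = p·τ̄, where τ̄ := E[δ_g(m,X) | G=1]. -/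
open MeasureTheory

/-- Pull-out helper: for integrable `f` and `m`-measurable `k` with `k·f` integrable,
`∫ k·f = ∫ k·E[f|m]`. -/
lemma pullout_aux {Ω : Type*} {m0 : MeasurableSpace Ω} (P : Measure Ω)
    [IsProbabilityMeasure P] {m : MeasurableSpace Ω} (hm : m ≤ m0)
    (f k : Ω → ℝ) (hf_int : Integrable f P) (hk : StronglyMeasurable[m] k)
    (hkf : Integrable (fun ω => k ω * f ω) P) :
    ∫ ω, k ω * f ω ∂P = ∫ ω, k ω * (P[f|m]) ω ∂P := by
  haveI : SigmaFinite (P.trim hm) := by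
    haveI := isFiniteMeasure_trim (μ := P) hm
    infer_instance
  calc ∫ ω, k ω * f ω ∂P = ∫ ω, (P[fun ω => k ω * f ω|m]) ω ∂P :=
        (integral_condExp hm).symm
    _ = ∫ ω, k ω * (P[f|m]) ω ∂P := by
        refine integral_congr_ae ?_
        have h := condExp_mul_of_stronglyMeasurable_left (μ := P) hk hkf hf_int
        filter_upwards [h] with ω hω using hω

/-- **population double-robustness identity for the controlled mean trend,
discrete mediator**: fix `g ∈ {0,1}` and `m ∈ S`, and let `π̃ : 𝓧 → (0,1]`,
`w̃ : S×𝓧 → [c,1]` and `δ̃ : S×𝓧 → ℝ` be measurable working models. If either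
`δ̃(m,X) = δ_g(m,X)` a.s., or (`π̃(X) = π(X)` a.s. and `w̃(m,X) = w(m,X)` a.s.), then
`E[1{G=g}·1{M=m}·(π̃(X)/w̃(m,X))·(ΔY − δ̃(m,X)) + G·δ̃(m,X)] = p·τ̄`,
where `τ̄ := E[δ_g(m,X) | G=1]`. -/
theorem controlled_double_robustness
    {Ω 𝓧 : Type*} [MeasurableSpace Ω] [MeasurableSpace 𝓧]
    (P : Measure Ω) [IsProbabilityMeasure P]
    (G : Ω → ℝ) (hGmeas : Measurable G) (hG01 : ∀ ω, G ω = 0 ∨ G ω = 1)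
    (hp0 : 0 < P {ω | G ω = 1}) (hp1 : P {ω | G ω = 1} < 1)
    (X : Ω → 𝓧) (hXmeas : Measurable X)
    -- discrete mediator
    (S : Set ℝ) (hS : S.Countable)
    (M : Ω → ℝ) (hMmeas : Measurable M) (hMS : ∀ ω, M ω ∈ S)
    (ΔY : Ω → ℝ) (hΔYint : Integrable ΔY P)
    -- fixed treatment level and mediator value
    (g m : ℝ) (hg : g = 0 ∨ g = 1) (hmS : m ∈ S)
    -- π(x), a measurable version of P(G=1 ∣ X=x)
    (π : 𝓧 → ℝ) (hπmeas : Measurable π)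
    (hπver : (fun ω => π (X ω)) =ᵐ[P] P[G | MeasurableSpace.comap X inferInstance])
    -- w(m,x), a measurable version of P(G=g, M=m ∣ X=x), with w(m,X) ≥ c a.s.
    (w : ℝ → 𝓧 → ℝ) (hwmeas : Measurable (fun p : ℝ × 𝓧 => w p.1 p.2))
    (hwver : (fun ω => w m (X ω)) =ᵐ[P]
      P[fun ω' => if G ω' = g ∧ M ω' = m then (1 : ℝ) else 0 |
        MeasurableSpace.comap X inferInstance])
    (c : ℝ) (hc : 0 < c) (hwc : ∀ᵐ ω ∂P, c ≤ w m (X ω))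
    -- δ_g(m,x), a version of E[ΔY ∣ G=g, M=m, X=x]
    (δg : ℝ → 𝓧 → ℝ) (hδgmeas : Measurable (fun p : ℝ × 𝓧 => δg p.1 p.2))
    (hδgver : ∀ h : 𝓧 → ℝ, Measurable h → (∃ C, ∀ x, |h x| ≤ C) →
      ∫ ω, (if G ω = g ∧ M ω = m then (1 : ℝ) else 0)
        * (ΔY ω - δg m (X ω)) * h (X ω) ∂P = 0)
    (hδgint : Integrable (fun ω => δg m (X ω)) P)
    -- working models π̃, w̃, δ̃
    (πt : 𝓧 → ℝ) (hπtmeas : Measurable πt) (hπtrange : ∀ x, 0 < πt x ∧ πt x ≤ 1)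
    (wt : ℝ → 𝓧 → ℝ) (hwtmeas : Measurable (fun p : ℝ × 𝓧 => wt p.1 p.2))
    (hwtrange : ∀ m' ∈ S, ∀ x, c ≤ wt m' x ∧ wt m' x ≤ 1)
    (δt : ℝ → 𝓧 → ℝ) (hδtmeas : Measurable (fun p : ℝ × 𝓧 => δt p.1 p.2))
    (hδtint : Integrable (fun ω => δt m (X ω)) P)
    -- all displayed expectations are finite
    (hφint : Integrable (fun ω => (if G ω = g ∧ M ω = m then (1 : ℝ) else 0)
      * (πt (X ω) / wt m (X ω)) * (ΔY ω - δt m (X ω))) P)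
    -- at least one working model is correct
    (hrobust : (∀ᵐ ω ∂P, δt m (X ω) = δg m (X ω)) ∨
      ((∀ᵐ ω ∂P, πt (X ω) = π (X ω)) ∧ (∀ᵐ ω ∂P, wt m (X ω) = w m (X ω)))) :
    ∫ ω, ((if G ω = g ∧ M ω = m then (1 : ℝ) else 0)
        * (πt (X ω) / wt m (X ω)) * (ΔY ω - δt m (X ω))
      + G ω * δt m (X ω)) ∂P
      = (P {ω | G ω = 1}).toReal *
        ((∫ ω, G ω * δg m (X ω) ∂P) / (P {ω | G ω = 1}).toReal) := by
  have hp_ne : (P {ω | G ω = 1}).toReal ≠ 0 :=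
    (ENNReal.toReal_pos hp0.ne' (measure_ne_top _ _)).ne'
  rw [mul_comm, div_mul_cancel₀ _ hp_ne]
  set I : Ω → ℝ := fun ω => if G ω = g ∧ M ω = m then (1 : ℝ) else 0 with hI_def
  -- measurability facts
  have hImeas : Measurable I := by
    apply Measurable.ite _ measurable_const measurable_const
    exact (hGmeas (measurableSet_singleton g)).inter (hMmeas (measurableSet_singleton m))
  have hwtm : Measurable (fun x => wt m x) := hwtmeas.comp measurable_prodMk_left
  have hδtm : Measurable (fun x => δt m x) := hδtmeas.comp measurable_prodMk_left
  have hδgm : Measurable (fun x => δg m x) := hδgmeas.comp measurable_prodMk_left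
  have hρmeas : Measurable (fun x => πt x / wt m x) := hπtmeas.div hwtm
  have hρbdd : ∀ x, |πt x / wt m x| ≤ 1 / c := by
    intro x
    have h1 := hπtrange x
    have h2 := hwtrange m hmS x
    rw [abs_of_nonneg (div_nonneg h1.1.le (hc.trans_le h2.1).le)]
    exact div_le_div₀ zero_le_one h1.2 hc h2.1
  -- integrability facts
  have hInorm : ∀ ω, ‖I ω‖ ≤ 1 := fun ω => by
    by_cases h : G ω = g ∧ M ω = m <;> simp [hI_def, h]
  have hIint : Integrable I P :=
    (integrable_const (1 : ℝ)).mono' hImeas.aestronglyMeasurable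
      (Filter.Eventually.of_forall hInorm)
  have hGnorm : ∀ ω, ‖G ω‖ ≤ 1 := fun ω => by rcases hG01 ω with h | h <;> simp [h]
  have hGint : Integrable G P :=
    (integrable_const (1 : ℝ)).mono' hGmeas.aestronglyMeasurable
      (Filter.Eventually.of_forall hGnorm)
  have hDdiff : Integrable (fun ω => δg m (X ω) - δt m (X ω)) P := hδgint.sub hδtint
  have hGDt : Integrable (fun ω => G ω * δt m (X ω)) P :=
    hδtint.bdd_mul hGmeas.aestronglyMeasurable (Filter.Eventually.of_forall hGnorm)
  have hGDg : Integrable (fun ω => G ω * δg m (X ω)) P :=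
    hδgint.bdd_mul hGmeas.aestronglyMeasurable (Filter.Eventually.of_forall hGnorm)
  have hkint : Integrable
      (fun ω => (πt (X ω) / wt m (X ω)) * (δg m (X ω) - δt m (X ω))) P :=
    hDdiff.bdd_mul (hρmeas.comp hXmeas).aestronglyMeasurable
      (c := 1 / c) (Filter.Eventually.of_forall fun ω => hρbdd (X ω))
  have hIk : Integrable
      (fun ω => I ω * ((πt (X ω) / wt m (X ω)) * (δg m (X ω) - δt m (X ω)))) P :=
    hkint.bdd_mul hImeas.aestronglyMeasurable (Filter.Eventually.of_forall hInorm)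
  -- Step 0: the δg-centered term integrates to zero
  have hstep0 : ∫ ω, I ω * (πt (X ω) / wt m (X ω)) * (ΔY ω - δg m (X ω)) ∂P = 0 := by
    have h := hδgver (fun x => πt x / wt m x) hρmeas ⟨1 / c, hρbdd⟩
    rw [← h]
    exact integral_congr_ae (Filter.Eventually.of_forall fun ω => by ring)
  -- Step 1: replace ΔY − δt by δg − δt
  have hstep1 : ∫ ω, I ω * (πt (X ω) / wt m (X ω)) * (ΔY ω - δt m (X ω)) ∂P
      = ∫ ω, I ω * ((πt (X ω) / wt m (X ω)) * (δg m (X ω) - δt m (X ω))) ∂P := by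
    have hsub := integral_sub hφint hIk
    have heq : ∫ ω, (I ω * (πt (X ω) / wt m (X ω)) * (ΔY ω - δt m (X ω))
        - I ω * ((πt (X ω) / wt m (X ω)) * (δg m (X ω) - δt m (X ω)))) ∂P = 0 := by
      rw [← hstep0]
      exact integral_congr_ae (Filter.Eventually.of_forall fun ω => by ring)
    rw [heq] at hsub
    linarith
  -- split the main integral
  rw [integral_add hφint hGDt, hstep1]
  -- case analysis on which model is correct
  rcases hrobust with hδ | ⟨hπ, hw⟩
  · have h1 : ∫ ω, I ω * ((πt (X ω) / wt m (X ω)) * (δg m (X ω) - δt m (X ω))) ∂P = 0 := by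
      rw [show (0 : ℝ) = ∫ (_ : Ω), (0 : ℝ) ∂P by simp]
      refine integral_congr_ae ?_
      filter_upwards [hδ] with ω hω
      rw [hω]; ring
    have h2 : ∫ ω, G ω * δt m (X ω) ∂P = ∫ ω, G ω * δg m (X ω) ∂P :=
      integral_congr_ae (by filter_upwards [hδ] with ω hω; rw [hω])
    rw [h1, h2, zero_add]
  · set 𝔪 : MeasurableSpace Ω := MeasurableSpace.comap X inferInstance with h𝔪
    have hm : 𝔪 ≤ _ := hXmeas.comap_le
    have hXm : Measurable[𝔪] X := Measurable.of_comap_le le_rfl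
    have hkSM : StronglyMeasurable[𝔪]
        (fun ω => (πt (X ω) / wt m (X ω)) * (δg m (X ω) - δt m (X ω))) :=
      ((hρmeas.comp hXm).mul ((hδgm.sub hδtm).comp hXm)).stronglyMeasurable
    have hdSM : StronglyMeasurable[𝔪] (fun ω => δg m (X ω) - δt m (X ω)) :=
      ((hδgm.sub hδtm).comp hXm).stronglyMeasurable
    have hkI : Integrable
        (fun ω => ((πt (X ω) / wt m (X ω)) * (δg m (X ω) - δt m (X ω))) * I ω) P := by
      refine hIk.congr (Filter.Eventually.of_forall fun ω => by ring)
    have hdG : Integrable (fun ω => (δg m (X ω) - δt m (X ω)) * G ω) P := by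
      refine (hGDg.sub hGDt).congr (Filter.Eventually.of_forall fun ω => by
        simp only [Pi.sub_apply]; ring)
    -- first pull-out: against I
    have hA : ∫ ω, I ω * ((πt (X ω) / wt m (X ω)) * (δg m (X ω) - δt m (X ω))) ∂P
        = ∫ ω, ((πt (X ω) / wt m (X ω)) * (δg m (X ω) - δt m (X ω))) * (P[I|𝔪]) ω ∂P := by
      rw [← pullout_aux P hm I _ hIint hkSM hkI]
      exact integral_congr_ae (Filter.Eventually.of_forall fun ω => by ring)
    -- second pull-out: against G
    have hB : ∫ ω, (δg m (X ω) - δt m (X ω)) * G ω ∂P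
        = ∫ ω, (δg m (X ω) - δt m (X ω)) * (P[G|𝔪]) ω ∂P :=
      pullout_aux P hm G _ hGint hdSM hdG
    -- chain of equalities
    have hchain : ∫ ω, I ω * ((πt (X ω) / wt m (X ω)) * (δg m (X ω) - δt m (X ω))) ∂P
        = ∫ ω, G ω * (δg m (X ω) - δt m (X ω)) ∂P := by
      rw [hA]
      have e1 : ∫ ω, ((πt (X ω) / wt m (X ω)) * (δg m (X ω) - δt m (X ω))) * (P[I|𝔪]) ω ∂P
          = ∫ ω, ((πt (X ω) / wt m (X ω)) * (δg m (X ω) - δt m (X ω))) * wt m (X ω) ∂P := by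
        refine integral_congr_ae ?_
        filter_upwards [hwver, hw] with ω h1 h2
        rw [← h1, h2]
      have e2 : ∫ ω, ((πt (X ω) / wt m (X ω)) * (δg m (X ω) - δt m (X ω))) * wt m (X ω) ∂P
          = ∫ ω, πt (X ω) * (δg m (X ω) - δt m (X ω)) ∂P := by
        refine integral_congr_ae (Filter.Eventually.of_forall fun ω => ?_)
        have hwt0 : wt m (X ω) ≠ 0 := (hc.trans_le (hwtrange m hmS (X ω)).1).ne'
        field_simp
      have e3 : ∫ ω, πt (X ω) * (δg m (X ω) - δt m (X ω)) ∂P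
          = ∫ ω, (δg m (X ω) - δt m (X ω)) * (P[G|𝔪]) ω ∂P := by
        refine integral_congr_ae ?_
        filter_upwards [hπ, hπver] with ω h1 h2
        rw [h1, h2]; ring
      rw [e1, e2, e3, ← hB]
      exact integral_congr_ae (Filter.Eventually.of_forall fun ω => by ring)
    rw [hchain]
    have hsplit : ∫ ω, G ω * (δg m (X ω) - δt m (X ω)) ∂P
        = (∫ ω, G ω * δg m (X ω) ∂P) - ∫ ω, G ω * δt m (X ω) ∂P := by
      rw [← integral_sub hGDg hGDt]
      exact integral_congr_ae (Filter.Eventually.of_forall fun ω => by ring)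
    rw [hsplit]
    ring
end

section
/- Structural causal model SCM 1 implies the first part of sequential ignorability: let X, U, ε_G, ε_M be random elements on a common probability space such that ε_M is independent of the triple (X, U, ε_G), where X takes values in a standard Borel space 𝒳. Define G := φ_G(X, U, ε_G) for a measurable φ_G with values in {0,1}, and for each g ∈ {0,1} define M(g) := m₀(X, g) + ε_M for a measurable m₀ : 𝒳 × {0,1} → ℝ and real-valued ε_M. Then for each g ∈ {0,1}, G and M(g) are conditionally independent given X. -/
open MeasureTheory ProbabilityTheory

open Set in
theorem aux_condIndep {Ω : Type*} {mX mW mE : MeasurableSpace Ω} {mΩ : MeasurableSpace Ω}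
    [StandardBorelSpace Ω] [Nonempty Ω]
    (μ : Measure Ω) [IsProbabilityMeasure μ]
    (hXW : mX ≤ mW) (hW : mW ≤ mΩ) (hE : mE ≤ mΩ)
    (hindep : ProbabilityTheory.Indep mE mW μ) :
    ProbabilityTheory.CondIndep mX mW (mX ⊔ mE) (hXW.trans hW) μ := by
  have hX : mX ≤ mΩ := hXW.trans hW
  -- key computation: for A ∈ mW, t ∈ mE
  have key : ∀ A t : Set Ω, MeasurableSet[mW] A → MeasurableSet[mE] t →
      (μ⟦A ∩ t | mX⟧) =ᵐ[μ] (μ⟦A | mX⟧) * (μ⟦t | mX⟧) := by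
    intro A t hA ht
    have hAm : MeasurableSet[mΩ] A := hW _ hA
    have htm : MeasurableSet[mΩ] t := hE _ ht
    set c : ℝ := (μ t).toReal with hc
    have ht_const : (μ⟦t | mX⟧) =ᵐ[μ] fun _ => c := by
      have h := condExp_indep_eq hE hX (f := t.indicator (fun _ => (1:ℝ)))
        ((stronglyMeasurable_const : StronglyMeasurable[mE] fun _ => (1:ℝ)).indicator ht)
        (indep_of_indep_of_le_right hindep hXW)
      refine h.trans (Filter.EventuallyEq.of_eq ?_)
      funext ω
      simp [integral_indicator htm, integral_const, Measure.restrict_apply_univ, hc, measureReal_def]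
    have hAt : (μ⟦A ∩ t | mX⟧) =ᵐ[μ] fun ω => c * (μ⟦A | mX⟧) ω := by
      refine (ae_eq_condExp_of_forall_setIntegral_eq hX
        ((integrable_const (1:ℝ)).indicator (hAm.inter htm)) ?_ ?_ ?_).symm
      · intro s _ _
        exact (integrable_condExp.const_mul c).integrableOn
      · intro s hs hμs
        have hsm : MeasurableSet[mΩ] s := hX _ hs
        have h1 : ∫ x in s, c * (μ⟦A | mX⟧) x ∂μ = c * ∫ x in s, (μ⟦A | mX⟧) x ∂μ :=
          integral_const_mul _ _
        have h2 : ∫ x in s, (μ⟦A | mX⟧) x ∂μ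
            = ∫ x in s, A.indicator (fun _ => (1:ℝ)) x ∂μ :=
          setIntegral_condExp hX ((integrable_const (1:ℝ)).indicator hAm) hs
        have h3 : ∫ x in s, A.indicator (fun _ => (1:ℝ)) x ∂μ = (μ (A ∩ s)).toReal := by
          rw [setIntegral_indicator hAm]
          simp [Set.inter_comm, measureReal_def]
        have h4 : ∫ x in s, (A ∩ t).indicator (fun _ => (1:ℝ)) x ∂μ
            = (μ (A ∩ t ∩ s)).toReal := by
          rw [setIntegral_indicator (hAm.inter htm)]
          simp [Set.inter_comm, measureReal_def]
        have hmul : μ (t ∩ (A ∩ s)) = μ t * μ (A ∩ s) := by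
          rw [Indep_iff] at hindep
          exact hindep t (A ∩ s) ht (hA.inter (hXW _ hs))
        rw [h1, h2, h3, h4]
        rw [show A ∩ t ∩ s = t ∩ (A ∩ s) by ext x; simp; tauto, hmul, ENNReal.toReal_mul]
      · exact (stronglyMeasurable_condExp.const_mul c).aestronglyMeasurable
    calc (μ⟦A ∩ t | mX⟧) =ᵐ[μ] fun ω => c * (μ⟦A | mX⟧) ω := hAt
      _ =ᵐ[μ] (μ⟦A | mX⟧) * (μ⟦t | mX⟧) := by
          filter_upwards [ht_const] with ω hω
          simp [hω, mul_comm]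
  -- π-systems
  set p1 : Set (Set Ω) := {s | MeasurableSet[mW] s} with hp1_def
  set p2 : Set (Set Ω) :=
    {u | ∃ s t : Set Ω, MeasurableSet[mX] s ∧ MeasurableSet[mE] t ∧ u = s ∩ t} with hp2_def
  have hgen1 : mW = MeasurableSpace.generateFrom p1 :=
    (@MeasurableSpace.generateFrom_measurableSet Ω mW).symm
  have hpi1 : IsPiSystem p1 := fun s hs t ht _ => MeasurableSet.inter hs ht
  have hgen2 : mX ⊔ mE = MeasurableSpace.generateFrom p2 := by
    refine le_antisymm (sup_le ?_ ?_) (MeasurableSpace.generateFrom_le ?_)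
    · intro s hs
      exact MeasurableSpace.measurableSet_generateFrom
        ⟨s, Set.univ, hs, MeasurableSet.univ, (Set.inter_univ s).symm⟩
    · intro t ht
      exact MeasurableSpace.measurableSet_generateFrom
        ⟨Set.univ, t, MeasurableSet.univ, ht, (Set.univ_inter t).symm⟩
    · rintro u ⟨s, t, hs, ht, rfl⟩
      exact MeasurableSet.inter ((le_sup_left : mX ≤ mX ⊔ mE) _ hs)
        ((le_sup_right : mE ≤ mX ⊔ mE) _ ht)
  have hpi2 : IsPiSystem p2 := by
    rintro u ⟨s1, t1, hs1, ht1, rfl⟩ v ⟨s2, t2, hs2, ht2, rfl⟩ _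
    refine ⟨s1 ∩ s2, t1 ∩ t2, MeasurableSet.inter hs1 hs2, MeasurableSet.inter ht1 ht2, ?_⟩
    ext x; simp; tauto
  have hcsets : CondIndepSets mX hX p1 p2 μ := by
    rw [condIndepSets_iff mX hX p1 p2 (fun s hs => hW _ hs)
      (fun u hu => by obtain ⟨s, t, hs, ht, rfl⟩ := hu; exact (hX _ hs).inter (hE _ ht)) μ]
    rintro t1 u ht1 ⟨s, t, hs, ht, rfl⟩
    have e1 : t1 ∩ (s ∩ t) = (t1 ∩ s) ∩ t := by ext x; simp; tauto
    have hkey := key (t1 ∩ s) t (MeasurableSet.inter ht1 (hXW _ hs)) ht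
    have hInd1 : (μ⟦t1 ∩ s | mX⟧) =ᵐ[μ] s.indicator (μ⟦t1 | mX⟧) := by
      have : (t1 ∩ s).indicator (fun _ => (1:ℝ))
          = s.indicator (t1.indicator (fun _ => (1:ℝ))) := by
        rw [Set.indicator_indicator, Set.inter_comm]
      rw [show (μ⟦t1 ∩ s | mX⟧) = μ[(t1 ∩ s).indicator (fun _ => (1:ℝ)) | mX] from rfl, this]
      exact condExp_indicator ((integrable_const (1:ℝ)).indicator (hW _ ht1)) hs
    have hInd2 : (μ⟦s ∩ t | mX⟧) =ᵐ[μ] s.indicator (μ⟦t | mX⟧) := by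
      have : (s ∩ t).indicator (fun _ => (1:ℝ))
          = s.indicator (t.indicator (fun _ => (1:ℝ))) := by
        rw [Set.indicator_indicator]
      rw [show (μ⟦s ∩ t | mX⟧) = μ[(s ∩ t).indicator (fun _ => (1:ℝ)) | mX] from rfl, this]
      exact condExp_indicator ((integrable_const (1:ℝ)).indicator (hE _ ht)) hs
    rw [e1]
    calc (μ⟦(t1 ∩ s) ∩ t | mX⟧) =ᵐ[μ] (μ⟦t1 ∩ s | mX⟧) * (μ⟦t | mX⟧) := hkey
      _ =ᵐ[μ] (μ⟦t1 | mX⟧) * (μ⟦s ∩ t | mX⟧) := by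
          filter_upwards [hInd1, hInd2] with ω h1 h2
          simp only [Pi.mul_apply, h1, h2]
          by_cases hω : ω ∈ s
          · simp [Set.indicator_of_mem hω]
          · simp [Set.indicator_of_notMem hω]
  exact CondIndepSets.condIndep hW (sup_le hX hE) hpi1 hpi2 hgen1 hgen2 hcsets

/-- **SCM 1 implies the first part of sequential ignorability**: if
`ε_M` is independent of `(X, U, ε_G)`, `G = φ_G(X,U,ε_G)` takes values in `{0,1}` and
`M(g) = m₀(X,g) + ε_M`, then for each `g ∈ {0,1}`, `G` and `M(g)` are conditionally
independent given `X` (in the sense of Mathlib's conditional independence for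
standard Borel spaces). -/
theorem scm1_first_sequential_ignorability
    {Ω 𝓧 𝓤 𝓔 : Type*} [MeasurableSpace Ω] [StandardBorelSpace Ω] [Nonempty Ω]
    [MeasurableSpace 𝓧] [MeasurableSpace 𝓤] [MeasurableSpace 𝓔]
    (P : Measure Ω) [IsProbabilityMeasure P]
    (X : Ω → 𝓧) (U : Ω → 𝓤) (εG : Ω → 𝓔) (εM : Ω → ℝ)
    (hXmeas : Measurable X) (hUmeas : Measurable U)
    (hεGmeas : Measurable εG) (hεMmeas : Measurable εM)
    -- ε_M is independent of (X, U, ε_G)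
    (hindep : IndepFun εM (fun ω => (X ω, U ω, εG ω)) P)
    -- G = φ_G(X, U, ε_G) ∈ {0,1}
    (φG : 𝓧 × 𝓤 × 𝓔 → ℝ) (hφGmeas : Measurable φG) (hφG01 : ∀ y, φG y = 0 ∨ φG y = 1)
    -- M(g) = m₀(X, g) + ε_M
    (m₀ : 𝓧 × ℝ → ℝ) (hm₀meas : Measurable m₀) :
    ∀ g ∈ ({0, 1} : Set ℝ),
      CondIndepFun (MeasurableSpace.comap X inferInstance) hXmeas.comap_le
        (fun ω => φG (X ω, U ω, εG ω)) (fun ω => m₀ (X ω, g) + εM ω) P := by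
  intro g _
  rw [condIndepFun_iff_condIndep]
  set W : Ω → 𝓧 × 𝓤 × 𝓔 := fun ω => (X ω, U ω, εG ω) with hW_def
  have hWmeas : Measurable W := hXmeas.prodMk (hUmeas.prodMk hεGmeas)
  have hIndep : ProbabilityTheory.Indep (MeasurableSpace.comap εM inferInstance)
      (MeasurableSpace.comap W inferInstance) P :=
    (IndepFun_iff_Indep _ _ _).mp hindep
  have hXW : MeasurableSpace.comap X inferInstance
      ≤ MeasurableSpace.comap W inferInstance := by
    have h1 : MeasurableSpace.comap X inferInstance
        = MeasurableSpace.comap W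
          (MeasurableSpace.comap Prod.fst (inferInstance : MeasurableSpace 𝓧)) :=
      (MeasurableSpace.comap_comp (f := Prod.fst) (g := W)).symm
    rw [h1]
    exact MeasurableSpace.comap_mono measurable_fst.comap_le
  have hG_le : MeasurableSpace.comap (fun ω => φG (X ω, U ω, εG ω)) inferInstance
      ≤ MeasurableSpace.comap W inferInstance := by
    have h1 : MeasurableSpace.comap (fun ω => φG (X ω, U ω, εG ω)) inferInstance
        = MeasurableSpace.comap W (MeasurableSpace.comap φG inferInstance) :=
      (MeasurableSpace.comap_comp (f := φG) (g := W)).symm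
    rw [h1]
    exact MeasurableSpace.comap_mono hφGmeas.comap_le
  set pXE : Ω → 𝓧 × ℝ := fun ω => (X ω, εM ω) with hpXE_def
  have hsup : MeasurableSpace.comap pXE inferInstance
      = MeasurableSpace.comap X inferInstance ⊔ MeasurableSpace.comap εM inferInstance := by
    rw [show (inferInstance : MeasurableSpace (𝓧 × ℝ))
        = MeasurableSpace.comap Prod.fst (inferInstance : MeasurableSpace 𝓧)
          ⊔ MeasurableSpace.comap Prod.snd (inferInstance : MeasurableSpace ℝ) from rfl,
      MeasurableSpace.comap_sup, MeasurableSpace.comap_comp, MeasurableSpace.comap_comp]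
    rfl
  have hM_le : MeasurableSpace.comap (fun ω => m₀ (X ω, g) + εM ω) inferInstance
      ≤ MeasurableSpace.comap X inferInstance ⊔ MeasurableSpace.comap εM inferInstance := by
    set h : 𝓧 × ℝ → ℝ := fun p => m₀ (p.1, g) + p.2 with hh_def
    have hhmeas : Measurable h :=
      (hm₀meas.comp (measurable_fst.prodMk measurable_const)).add measurable_snd
    have h1 : MeasurableSpace.comap (fun ω => m₀ (X ω, g) + εM ω) inferInstance
        = MeasurableSpace.comap pXE (MeasurableSpace.comap h inferInstance) :=
      (MeasurableSpace.comap_comp (f := h) (g := pXE)).symm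
    rw [h1, ← hsup]
    exact MeasurableSpace.comap_mono hhmeas.comap_le
  have base := aux_condIndep P hXW hWmeas.comap_le hεMmeas.comap_le hIndep
  exact condIndep_of_condIndep_of_le_left
    (condIndep_of_condIndep_of_le_right base hM_le) hG_le
end

section
/- Structural causal model SCM 1 implies the parallel trends assumption and the second part of sequential ignorability: let X, U, ε_G, ε_M, ε_0, ε_1 be random elements with (ε_0, ε_1) integrable real random variables independent of (X, U, ε_G, ε_M), and ε_M independent of (X, U, ε_G). Define G := φ_G(X, U, ε_G) ∈ {0,1}, M(g) := m₀(X, g) + ε_M, Y0(g) := f₀(X) + U + ε_0 for g ∈ {0,1}, and Y1(g, m) := f₁(X, g, m) + U + ε_1 for g ∈ {0,1}, m ∈ ℝ, with f₀, f₁, m₀, φ_G measurable and f₁(X,0,M(0)) integrable. Then: (a) E[Y1(0, M(0)) − Y0(0) | σ(M(0), G, X)] = f₁(X, 0, M(0)) − f₀(X) + E[ε_1 − ε_0] a.s., which is σ(M(0), X)-measurable, so Assumption 2 (parallel trends) holds; and (b) for every m ∈ ℝ, E[Y1(0, m) − Y0(0) | σ(M(1), G, X)] = f₁(X, 0, m)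 − f₀(X) + E[ε_1 − ε_0] a.s., which is σ(X)-measurable, so Assumption 3(ii) (the second part of sequential ignorability) holds. -/
open MeasureTheory ProbabilityTheory

lemma scm1_key {Ω β : Type*} [MeasurableSpace Ω] [MeasurableSpace β]
    (P : Measure Ω) [IsProbabilityMeasure P]
    (T : Ω → β) (hT : Measurable T) (h Z : Ω → ℝ)
    (hh : Measurable[MeasurableSpace.comap T inferInstance] h)
    (hZ : Measurable Z)
    (hhint : Integrable h P) (hZint : Integrable Z P)
    (hindep : IndepFun Z T P) :
    P[fun ω => h ω + Z ω | MeasurableSpace.comap T inferInstance]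
      =ᵐ[P] fun ω => h ω + ∫ ω', Z ω' ∂P := by
  have hle : MeasurableSpace.comap T inferInstance ≤ _ := hT.comap_le
  have h1 : P[h | MeasurableSpace.comap T inferInstance] = h :=
    condExp_of_stronglyMeasurable hle hh.stronglyMeasurable hhint
  have h2 : P[Z | MeasurableSpace.comap T inferInstance] =ᵐ[P] fun _ => ∫ ω', Z ω' ∂P := by
    refine condExp_indep_eq hZ.comap_le hle ?_ ?_
    · exact (Measurable.of_comap_le le_rfl).stronglyMeasurable
    · exact (ProbabilityTheory.IndepFun_iff_Indep Z T P).mp hindep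
  calc P[fun ω => h ω + Z ω | MeasurableSpace.comap T inferInstance]
      =ᵐ[P] P[h | _] + P[Z | _] := condExp_add hhint hZint _
    _ =ᵐ[P] fun ω => h ω + ∫ ω', Z ω' ∂P := by
        rw [h1]; exact Filter.EventuallyEq.rfl.add h2

/-- **SCM 1 implies parallel trends and the second part of sequential
ignorability**: with `G = φ_G(X,U,ε_G) ∈ {0,1}`, `M(g) = m₀(X,g) + ε_M`,
`Y0(g) = f₀(X) + U + ε₀` and `Y1(g,m) = f₁(X,g,m) + U + ε₁`, where `(ε₀,ε₁)` is
independent of `(X,U,ε_G,ε_M)` and `ε_M` is independent of `(X,U,ε_G)`: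
(a) `E[Y1(0,M(0)) − Y0(0) | σ(M(0),G,X)] = f₁(X,0,M(0)) − f₀(X) + E[ε₁−ε₀]` a.s.,
    which is `σ(M(0),X)`-measurable, so Assumption 2 (parallel trends) holds; and
(b) for every `m`, `E[Y1(0,m) − Y0(0) | σ(M(1),G,X)] = f₁(X,0,m) − f₀(X) + E[ε₁−ε₀]` a.s.,
    which is `σ(X)`-measurable, so Assumption 3(ii) holds. -/
theorem scm1_parallel_trends_and_SI2
    {Ω 𝓧 𝓔 : Type*} [MeasurableSpace Ω]
    [MeasurableSpace 𝓧] [MeasurableSpace 𝓔]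
    (P : Measure Ω) [IsProbabilityMeasure P]
    (X : Ω → 𝓧) (U : Ω → ℝ) (εG : Ω → 𝓔) (εM ε0 ε1 : Ω → ℝ)
    (hXmeas : Measurable X) (hUmeas : Measurable U) (hεGmeas : Measurable εG)
    (hεMmeas : Measurable εM) (hε0meas : Measurable ε0) (hε1meas : Measurable ε1)
    (hε0int : Integrable ε0 P) (hε1int : Integrable ε1 P)
    -- (ε₀, ε₁) is independent of (X, U, ε_G, ε_M)
    (hindep01 : IndepFun (fun ω => (ε0 ω, ε1 ω)) (fun ω => (X ω, U ω, εG ω, εM ω)) P)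
    -- ε_M is independent of (X, U, ε_G)
    (hindepM : IndepFun εM (fun ω => (X ω, U ω, εG ω)) P)
    -- structural functions
    (φG : 𝓧 × ℝ × 𝓔 → ℝ) (hφGmeas : Measurable φG) (hφG01 : ∀ y, φG y = 0 ∨ φG y = 1)
    (m₀ : 𝓧 × ℝ → ℝ) (hm₀meas : Measurable m₀)
    (f₀ : 𝓧 → ℝ) (hf₀meas : Measurable f₀)
    (f₁ : 𝓧 × ℝ × ℝ → ℝ) (hf₁meas : Measurable f₁)
    -- integrability
    (hf₀int : Integrable (fun ω => f₀ (X ω)) P)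
    (hf₁M0int : Integrable (fun ω => f₁ (X ω, 0, m₀ (X ω, 0) + εM ω)) P)
    (hf₁mint : ∀ m : ℝ, Integrable (fun ω => f₁ (X ω, 0, m)) P)
    -- the structural model: G, M(g), Y0(g), Y1(g,m)
    (G : Ω → ℝ) (hG : G = fun ω => φG (X ω, U ω, εG ω))
    (M' : ℝ → Ω → ℝ) (hM' : ∀ g, M' g = fun ω => m₀ (X ω, g) + εM ω)
    (Y0 : ℝ → Ω → ℝ) (hY0 : ∀ g ∈ ({0, 1} : Set ℝ), Y0 g = fun ω => f₀ (X ω) + U ω + ε0 ω)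
    (Y1 : ℝ → ℝ → Ω → ℝ)
    (hY1 : ∀ g ∈ ({0, 1} : Set ℝ), ∀ m : ℝ, Y1 g m = fun ω => f₁ (X ω, g, m) + U ω + ε1 ω) :
    -- (a) the conditional expectation formula for E[Y1(0,M(0)) − Y0(0) ∣ σ(M(0),G,X)]
    (P[fun ω => Y1 0 (M' 0 ω) ω - Y0 0 ω |
        MeasurableSpace.comap (fun ω => (M' 0 ω, G ω, X ω)) inferInstance]
      =ᵐ[P] fun ω => f₁ (X ω, 0, M' 0 ω) - f₀ (X ω) + ∫ ω', (ε1 ω' - ε0 ω') ∂P) ∧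
    -- (a) Assumption 2 (parallel trends)
    (P[fun ω => Y1 0 (M' 0 ω) ω - Y0 0 ω |
        MeasurableSpace.comap (fun ω => (M' 0 ω, G ω, X ω)) inferInstance]
      =ᵐ[P] P[fun ω => Y1 0 (M' 0 ω) ω - Y0 0 ω |
        MeasurableSpace.comap (fun ω => (M' 0 ω, X ω)) inferInstance]) ∧
    -- (b) Assumption 3(ii): for every m the conditional expectation given σ(M(1),G,X)
    -- equals a σ(X)-measurable function of the covariates
    (∀ m : ℝ,
      P[fun ω => Y1 0 m ω - Y0 0 ω |
          MeasurableSpace.comap (fun ω => (M' 1 ω, G ω, X ω)) inferInstance]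
        =ᵐ[P] fun ω => f₁ (X ω, 0, m) - f₀ (X ω) + ∫ ω', (ε1 ω' - ε0 ω') ∂P) := by
  have hY0' := hY0 0 (by simp)
  have hY1' := hY1 0 (by simp)
  subst hG
  simp only [hM' 0, hM' 1, hY0', hY1']
  set Z : Ω → ℝ := fun ω => ε1 ω - ε0 ω with hZdef
  have hZmeas : Measurable Z := hε1meas.sub hε0meas
  have hZint : Integrable Z P := hε1int.sub hε0int
  have hbig : Measurable (fun ω => (X ω, U ω, εG ω, εM ω)) :=
    hXmeas.prodMk (hUmeas.prodMk (hεGmeas.prodMk hεMmeas))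
  have hsub : Measurable (fun p : ℝ × ℝ => p.2 - p.1) := measurable_snd.sub measurable_fst
  -- the three conditioning maps
  have hM0meas : Measurable (fun ω => m₀ (X ω, (0:ℝ)) + εM ω) :=
    (hm₀meas.comp (hXmeas.prodMk measurable_const)).add hεMmeas
  have hM1meas : Measurable (fun ω => m₀ (X ω, (1:ℝ)) + εM ω) :=
    (hm₀meas.comp (hXmeas.prodMk measurable_const)).add hεMmeas
  have hGmeas : Measurable (fun ω => φG (X ω, U ω, εG ω)) :=
    hφGmeas.comp (hXmeas.prodMk (hUmeas.prodMk hεGmeas))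
  -- pointwise rewriting of the integrand
  have hpt : ∀ (A : Ω → ℝ),
      (fun ω => (A ω + U ω + ε1 ω) - (f₀ (X ω) + U ω + ε0 ω))
        = fun ω => (A ω - f₀ (X ω)) + Z ω := by
    intro A; funext ω; simp only [hZdef]; ring
  -- main claim (a)
  have hψ0 : Measurable (fun q : 𝓧 × ℝ × 𝓔 × ℝ =>
      ((m₀ (q.1, 0) + q.2.2.2, φG (q.1, q.2.1, q.2.2.1), q.1) : ℝ × ℝ × 𝓧)) := by
    fun_prop
  have hψ0' : Measurable (fun q : 𝓧 × ℝ × 𝓔 × ℝ =>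
      ((m₀ (q.1, 0) + q.2.2.2, q.1) : ℝ × 𝓧)) := by
    fun_prop
  have hψ1 : Measurable (fun q : 𝓧 × ℝ × 𝓔 × ℝ =>
      ((m₀ (q.1, 1) + q.2.2.2, φG (q.1, q.2.1, q.2.2.1), q.1) : ℝ × ℝ × 𝓧)) := by
    fun_prop
  have hF : Measurable (fun p : ℝ × ℝ × 𝓧 => f₁ (p.2.2, 0, p.1) - f₀ p.2.2) := by
    fun_prop
  have hF' : Measurable (fun p : ℝ × 𝓧 => f₁ (p.2, 0, p.1) - f₀ p.2) := by
    fun_prop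
  have hFm : ∀ m : ℝ, Measurable (fun p : ℝ × ℝ × 𝓧 => f₁ (p.2.2, 0, m) - f₀ p.2.2) := by
    intro m; fun_prop
  have hA : P[fun ω => (f₁ (X ω, 0, m₀ (X ω, 0) + εM ω) + U ω + ε1 ω)
        - (f₀ (X ω) + U ω + ε0 ω) |
      MeasurableSpace.comap
        (fun ω => (m₀ (X ω, 0) + εM ω, φG (X ω, U ω, εG ω), X ω)) inferInstance]
      =ᵐ[P] fun ω => f₁ (X ω, 0, m₀ (X ω, 0) + εM ω) - f₀ (X ω) + ∫ ω', Z ω' ∂P := by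
    rw [hpt]
    refine scm1_key (β := ℝ × ℝ × 𝓧) P
      (fun ω => (m₀ (X ω, 0) + εM ω, φG (X ω, U ω, εG ω), X ω))
      (hM0meas.prodMk (hGmeas.prodMk hXmeas))
      (fun ω => f₁ (X ω, 0, m₀ (X ω, 0) + εM ω) - f₀ (X ω)) Z
      (hF.comp (Measurable.of_comap_le le_rfl)) hZmeas
      (hf₁M0int.sub hf₀int) hZint (hindep01.comp hsub hψ0)
  -- same formula for the smaller σ-algebra σ(M(0),X)
  have hA' : P[fun ω => (f₁ (X ω, 0, m₀ (X ω, 0) + εM ω) + U ω + ε1 ω)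
        - (f₀ (X ω) + U ω + ε0 ω) |
      MeasurableSpace.comap (fun ω => (m₀ (X ω, 0) + εM ω, X ω)) inferInstance]
      =ᵐ[P] fun ω => f₁ (X ω, 0, m₀ (X ω, 0) + εM ω) - f₀ (X ω) + ∫ ω', Z ω' ∂P := by
    rw [hpt]
    refine scm1_key (β := ℝ × 𝓧) P
      (fun ω => (m₀ (X ω, 0) + εM ω, X ω))
      (hM0meas.prodMk hXmeas)
      (fun ω => f₁ (X ω, 0, m₀ (X ω, 0) + εM ω) - f₀ (X ω)) Z
      (hF'.comp (Measurable.of_comap_le le_rfl)) hZmeas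
      (hf₁M0int.sub hf₀int) hZint (hindep01.comp hsub hψ0')
  refine ⟨hA, hA.trans hA'.symm, ?_⟩
  -- (b)
  intro m
  have hptm : (fun ω => (f₁ (X ω, 0, m) + U ω + ε1 ω) - (f₀ (X ω) + U ω + ε0 ω))
      = fun ω => (f₁ (X ω, 0, m) - f₀ (X ω)) + Z ω := by
    funext ω; simp only [hZdef]; ring
  rw [hptm]
  exact scm1_key (β := ℝ × ℝ × 𝓧) P
    (fun ω => (m₀ (X ω, 1) + εM ω, φG (X ω, U ω, εG ω), X ω))
    (hM1meas.prodMk (hGmeas.prodMk hXmeas))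
    (fun ω => f₁ (X ω, 0, m) - f₀ (X ω)) Z
    ((hFm m).comp (Measurable.of_comap_le le_rfl)) hZmeas
    ((hf₁mint m).sub hf₀int) hZint (hindep01.comp hsub hψ1)
end

section
/- Structural causal model SCM 2 implies the identification assumptions: let X, U, ε_G, ε_M, ε_0, ε_1 be random elements with ε_G independent of (X, U, ε_M, ε_0, ε_1) and (ε_0, ε_1) integrable real random variables independent of (X, U, ε_G, ε_M). Define G := φ_G(X, ε_G) ∈ {0,1}, M(g) := m₀(X, g, U) + ε_M for g ∈ {0,1}, Y0(g) := f₀(X) + U + ε_0, and Y1(g, m) := f₁(X, g, m) + U + ε_1, with φ_G, m₀, f₀, f₁ measurable and f₁(X,0,M(0)) integrable. Then: (a) for each g ∈ {0,1}, G and M(g) are conditionally independent given X (first part of sequential ignorability); (b) E[Y1(0, M(0)) − Y0(0) | σ(M(0), G, X)] = f₁(X, 0, M(0)) − f₀(X) + E[ε_1 − ε_0] a.s., which is σ(M(0), X)-measurable, so Assumption 2 (parallel trends) holds; and (c) for every m ∈ ℝ, E[Y1(0, m) − Y0(0) | σ(M(1), G, X)] = f₁(X, 0, m) − f₀(X) +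 E[ε_1 − ε_0] a.s., which is σ(X)-measurable, so Assumption 3(ii) holds. -/
open MeasureTheory ProbabilityTheory

lemma integrable_of_abs_le_one' {Ω : Type*} [MeasurableSpace Ω] {P : Measure Ω}
    [IsFiniteMeasure P] {h : Ω → ℝ} (hm : AEStronglyMeasurable h P) (hb : ∀ ω, |h ω| ≤ 1) :
    Integrable h P :=
  (integrable_const (1:ℝ)).mono' hm (Filter.Eventually.of_forall hb)

lemma key_condexp {Ω 𝓩 𝓔 : Type*} [MeasurableSpace Ω] [MeasurableSpace 𝓩]
    [MeasurableSpace 𝓔] (P : Measure Ω) [IsProbabilityMeasure P]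
    {Z : Ω → 𝓩} {W : Ω → 𝓔} (hZ : Measurable Z) (hW : Measurable W)
    (hind : IndepFun W Z P) {B : Set (𝓩 × 𝓔)} (hB : MeasurableSet B) :
    P[((fun ω => (Z ω, W ω)) ⁻¹' B).indicator (fun _ => (1:ℝ)) |
        MeasurableSpace.comap Z inferInstance]
      =ᵐ[P] fun ω => ((P.map W) (Prod.mk (Z ω) ⁻¹' B)).toReal := by
  set ν := P.map W with hν
  have hνprob : IsProbabilityMeasure ν := Measure.isProbabilityMeasure_map hW.aemeasurable
  have hmZ : MeasurableSpace.comap Z inferInstance ≤ ‹MeasurableSpace Ω› := hZ.comap_le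
  have hS : MeasurableSet ((fun ω => (Z ω, W ω)) ⁻¹' B) := (hZ.prodMk hW) hB
  have hψ : Measurable fun z => ν (Prod.mk z ⁻¹' B) := measurable_measure_prodMk_left hB
  have hgmeas : Measurable fun ω => (ν (Prod.mk (Z ω) ⁻¹' B)).toReal :=
    (hψ.comp hZ).ennreal_toReal
  have hgbd : ∀ ω, |(ν (Prod.mk (Z ω) ⁻¹' B)).toReal| ≤ 1 := by
    intro ω
    rw [abs_of_nonneg ENNReal.toReal_nonneg]
    have := prob_le_one (μ := ν) (s := Prod.mk (Z ω) ⁻¹' B)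
    simpa using ENNReal.toReal_mono ENNReal.one_ne_top this
  have hgint : Integrable (fun ω => (ν (Prod.mk (Z ω) ⁻¹' B)).toReal) P :=
    integrable_of_abs_le_one' hgmeas.aestronglyMeasurable hgbd
  have hlaw : P.map (fun ω => (Z ω, W ω)) = (P.map Z).prod ν :=
    (indepFun_iff_map_prod_eq_prod_map_map hZ.aemeasurable hW.aemeasurable).mp hind.symm
  have key : ∀ D : Set (𝓩 × 𝓔), MeasurableSet D →
      P ((fun ω => (Z ω, W ω)) ⁻¹' D) = ∫⁻ z, ν (Prod.mk z ⁻¹' D) ∂(P.map Z) := by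
    intro D hD
    rw [← Measure.map_apply (hZ.prodMk hW) hD, hlaw, Measure.prod_apply hD]
  refine (ae_eq_condExp_of_forall_setIntegral_eq hmZ
    ((integrable_const (1:ℝ)).indicator hS) (fun s _ _ => hgint.integrableOn)
    ?_ ?_).symm
  · rintro s ⟨C, hC, rfl⟩ _
    have hrhs : ∫ x in Z ⁻¹' C, ((fun ω => (Z ω, W ω)) ⁻¹' B).indicator (fun _ => (1:ℝ)) x ∂P
        = (P (Z ⁻¹' C ∩ (fun ω => (Z ω, W ω)) ⁻¹' B)).toReal := by
      rw [setIntegral_indicator hS, setIntegral_const, smul_eq_mul, mul_one]; rfl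
    rw [hrhs]
    have hmap : ∫ x in Z ⁻¹' C, (ν (Prod.mk (Z x) ⁻¹' B)).toReal ∂P
        = ∫ z in C, (ν (Prod.mk z ⁻¹' B)).toReal ∂(P.map Z) := by
      rw [setIntegral_map hC hψ.ennreal_toReal.aestronglyMeasurable hZ.aemeasurable]
    rw [hmap, integral_toReal ((hψ.aemeasurable).restrict)
      (Filter.Eventually.of_forall fun z => lt_of_le_of_lt prob_le_one ENNReal.one_lt_top)]
    congr 1
    have hD : MeasurableSet ((C ×ˢ Set.univ) ∩ B) := (hC.prod MeasurableSet.univ).inter hB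
    have h1 : ∫⁻ z in C, ν (Prod.mk z ⁻¹' B) ∂(P.map Z)
        = ∫⁻ z, ν (Prod.mk z ⁻¹' ((C ×ˢ Set.univ) ∩ B)) ∂(P.map Z) := by
      rw [← lintegral_indicator hC (fun z => ν (Prod.mk z ⁻¹' B))]
      congr 1
      funext z
      by_cases hz : z ∈ C
      · simp [Set.indicator_of_mem hz, Set.preimage_inter, hz, Set.mk_preimage_prod,
          Set.inter_comm]
      · simp [Set.indicator_of_notMem hz, Set.preimage_inter, hz, Set.mk_preimage_prod]
    rw [h1, ← key _ hD]
    congr 1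
    ext ω
    simp [Set.mk_preimage_prod]
  · refine StronglyMeasurable.aestronglyMeasurable ?_
    have hZm : Measurable[MeasurableSpace.comap Z inferInstance] Z :=
      Measurable.of_comap_le le_rfl
    exact (hψ.ennreal_toReal.comp hZm).stronglyMeasurable

lemma condIndep_helper {Ω 𝓧 𝓩 𝓔 β γ : Type*} [mΩ : MeasurableSpace Ω] [StandardBorelSpace Ω]
    [MeasurableSpace 𝓧] [MeasurableSpace 𝓩] [MeasurableSpace 𝓔]
    [MeasurableSpace β] [MeasurableSpace γ]
    (P : Measure Ω) [IsProbabilityMeasure P]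
    {X : Ω → 𝓧} {Z : Ω → 𝓩} {W : Ω → 𝓔} (hX : Measurable X) (hZ : Measurable Z)
    (hW : Measurable W) (hind : IndepFun W Z P)
    (π : 𝓩 → 𝓧) (hπ : Measurable π) (hXZ : ∀ ω, X ω = π (Z ω))
    {f : Ω → β} {g : Ω → γ} (hf : Measurable f) (hg : Measurable g)
    (F : 𝓧 × 𝓔 → β) (hF : Measurable F) (hfF : ∀ ω, f ω = F (X ω, W ω))
    (ξ : 𝓩 → γ) (hξ : Measurable ξ) (hgZ : ∀ ω, g ω = ξ (Z ω)) :
    CondIndepFun (MeasurableSpace.comap X inferInstance) hX.comap_le f g P := by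
  rw [condIndepFun_iff _ _ _ _ hf hg]
  rintro t1 t2 ⟨A1, hA1, rfl⟩ ⟨A2, hA2, rfl⟩
  have hmXle : (MeasurableSpace.comap X inferInstance) ≤ mΩ := hX.comap_le
  have hmZle : (MeasurableSpace.comap Z inferInstance) ≤ mΩ := hZ.comap_le
  have hmXZ : (MeasurableSpace.comap X inferInstance) ≤ (MeasurableSpace.comap Z inferInstance) := by
    rintro s ⟨A, hA, rfl⟩
    exact ⟨π ⁻¹' A, hπ hA, by ext ω; simp [hXZ]⟩
  set ν := P.map W with hν
  set B : Set (𝓩 × 𝓔) := (fun p : 𝓩 × 𝓔 => F (π p.1, p.2)) ⁻¹' A1 with hBdef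
  have hB : MeasurableSet B := (hF.comp ((hπ.comp measurable_fst).prodMk measurable_snd)) hA1
  have hSeq : f ⁻¹' A1 = (fun ω => (Z ω, W ω)) ⁻¹' B := by
    ext ω; simp [hBdef, hfF, hXZ]
  have hS : MeasurableSet (f ⁻¹' A1) := hf hA1
  have hT : MeasurableSet (g ⁻¹' A2) := hg hA2
  have hTmZ : MeasurableSet[(MeasurableSpace.comap Z inferInstance)] (g ⁻¹' A2) := ⟨ξ ⁻¹' A2, hξ hA2, by ext ω; simp [hgZ]⟩
  set ψ : 𝓧 → ℝ := fun x => (ν ((fun e => F (x, e)) ⁻¹' A1)).toReal with hψdef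
  have hψmeas : Measurable ψ := by
    have : Measurable fun x => ν (Prod.mk x ⁻¹' (F ⁻¹' A1)) :=
      measurable_measure_prodMk_left (hF hA1)
    exact this.ennreal_toReal
  have hXmX : Measurable[(MeasurableSpace.comap X inferInstance)] X := Measurable.of_comap_le le_rfl
  have hψXm : StronglyMeasurable[(MeasurableSpace.comap X inferInstance)] (fun ω => ψ (X ω)) :=
    ((hψmeas.comp hXmX)).stronglyMeasurable
  have hψbd : ∀ ω, |ψ (X ω)| ≤ 1 := by
    intro ω
    rw [abs_of_nonneg ENNReal.toReal_nonneg]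
    have hνprob : IsProbabilityMeasure ν := Measure.isProbabilityMeasure_map hW.aemeasurable
    simpa using ENNReal.toReal_mono ENNReal.one_ne_top
      (prob_le_one (μ := ν) (s := (fun e => F (X ω, e)) ⁻¹' A1))
  have hψint : Integrable (fun ω => ψ (X ω)) P :=
    integrable_of_abs_le_one' ((hψmeas.comp hX).aestronglyMeasurable) hψbd
  -- key: conditional expectation of 1_{f⁻¹A1} given (MeasurableSpace.comap Z inferInstance) is ψ ∘ X
  have h1 : P[(f ⁻¹' A1).indicator (fun _ => (1:ℝ)) | (MeasurableSpace.comap Z inferInstance)] =ᵐ[P] fun ω => ψ (X ω) := by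
    rw [hSeq]
    refine (key_condexp P hZ hW hind hB).trans ?_
    refine Filter.Eventually.of_forall fun ω => ?_
    have : Prod.mk (Z ω) ⁻¹' B = (fun e => F (X ω, e)) ⁻¹' A1 := by
      ext e; simp [hBdef, hXZ]
    simp [hψdef, this, hν]
  -- tower: conditional expectation of 1_{f⁻¹A1} given (MeasurableSpace.comap X inferInstance) is ψ ∘ X
  have h2 : P[(f ⁻¹' A1).indicator (fun _ => (1:ℝ)) | (MeasurableSpace.comap X inferInstance)] =ᵐ[P] fun ω => ψ (X ω) := by
    calc P[(f ⁻¹' A1).indicator (fun _ => (1:ℝ)) | (MeasurableSpace.comap X inferInstance)]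
        =ᵐ[P] P[P[(f ⁻¹' A1).indicator (fun _ => (1:ℝ)) | (MeasurableSpace.comap Z inferInstance)] | (MeasurableSpace.comap X inferInstance)] :=
          (condExp_condExp_of_le hmXZ hmZle).symm
      _ =ᵐ[P] P[(fun ω => ψ (X ω)) | (MeasurableSpace.comap X inferInstance)] := condExp_congr_ae h1
      _ =ᵐ[P] fun ω => ψ (X ω) := by
          rw [condExp_of_stronglyMeasurable hmXle hψXm hψint]
  -- product step
  have hind_prod : (f ⁻¹' A1 ∩ g ⁻¹' A2).indicator (fun _ => (1:ℝ))
      = (g ⁻¹' A2).indicator (fun _ => (1:ℝ)) * (f ⁻¹' A1).indicator (fun _ => (1:ℝ)) := by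
    funext ω
    by_cases h1' : ω ∈ f ⁻¹' A1 <;> by_cases h2' : ω ∈ g ⁻¹' A2 <;>
      simp [Set.indicator, h1', h2']
  have hSint : Integrable ((f ⁻¹' A1).indicator (fun _ => (1:ℝ))) P :=
    (integrable_const (1:ℝ)).indicator hS
  have hSTint : Integrable ((g ⁻¹' A2).indicator (fun _ => (1:ℝ))
      * (f ⁻¹' A1).indicator (fun _ => (1:ℝ))) P := by
    rw [← hind_prod]
    exact (integrable_const (1:ℝ)).indicator (hS.inter hT)
  have h3 : P[(f ⁻¹' A1 ∩ g ⁻¹' A2).indicator (fun _ => (1:ℝ)) | (MeasurableSpace.comap Z inferInstance)]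
      =ᵐ[P] fun ω => (g ⁻¹' A2).indicator (fun _ => (1:ℝ)) ω * ψ (X ω) := by
    rw [hind_prod]
    refine (condExp_mul_of_stronglyMeasurable_left (stronglyMeasurable_const.indicator hTmZ)
      hSTint hSint).trans ?_
    filter_upwards [h1] with ω hω
    simp only [Pi.mul_apply, hω]
  have h4 : P[(f ⁻¹' A1 ∩ g ⁻¹' A2).indicator (fun _ => (1:ℝ)) | (MeasurableSpace.comap X inferInstance)]
      =ᵐ[P] (fun ω => ψ (X ω)) * P[(g ⁻¹' A2).indicator (fun _ => (1:ℝ)) | (MeasurableSpace.comap X inferInstance)] := by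
    have hTint : Integrable ((g ⁻¹' A2).indicator (fun _ => (1:ℝ))) P :=
      (integrable_const (1:ℝ)).indicator hT
    have hmul_int : Integrable ((fun ω => ψ (X ω)) * (g ⁻¹' A2).indicator (fun _ => (1:ℝ))) P := by
      refine integrable_of_abs_le_one' ?_ ?_
      · exact ((hψmeas.comp hX).mul ((measurable_const (a := (1:ℝ))).indicator hT)).aestronglyMeasurable
      · intro ω
        rw [Pi.mul_apply, abs_mul]
        calc |ψ (X ω)| * |(g ⁻¹' A2).indicator (fun _ => (1:ℝ)) ω| ≤ 1 * 1 := by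
              refine mul_le_mul (hψbd ω) ?_ (abs_nonneg _) zero_le_one
              by_cases h : ω ∈ g ⁻¹' A2 <;> simp [Set.indicator, h]
          _ = 1 := by norm_num
    calc P[(f ⁻¹' A1 ∩ g ⁻¹' A2).indicator (fun _ => (1:ℝ)) | (MeasurableSpace.comap X inferInstance)]
        =ᵐ[P] P[P[(f ⁻¹' A1 ∩ g ⁻¹' A2).indicator (fun _ => (1:ℝ)) | (MeasurableSpace.comap Z inferInstance)] | (MeasurableSpace.comap X inferInstance)] :=
          (condExp_condExp_of_le hmXZ hmZle).symm
      _ =ᵐ[P] P[(fun ω => ψ (X ω)) * (g ⁻¹' A2).indicator (fun _ => (1:ℝ)) | (MeasurableSpace.comap X inferInstance)] := by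
          refine condExp_congr_ae (h3.trans ?_)
          exact Filter.Eventually.of_forall fun ω => (mul_comm _ _)
      _ =ᵐ[P] (fun ω => ψ (X ω)) * P[(g ⁻¹' A2).indicator (fun _ => (1:ℝ)) | (MeasurableSpace.comap X inferInstance)] :=
          condExp_mul_of_stronglyMeasurable_left hψXm hmul_int hTint
  refine h4.trans ?_
  filter_upwards [h2] with ω hω
  simp only [Pi.mul_apply, hω]


lemma condexp_structural {Ω 𝓨 : Type*} [mΩ : MeasurableSpace Ω] [MeasurableSpace 𝓨]
    (P : Measure Ω) [IsProbabilityMeasure P]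
    {V : Ω → 𝓨} (hV : Measurable V) {m₁ : MeasurableSpace Ω} (hm₁ : m₁ ≤ mΩ)
    {e : Ω → ℝ} (he : Integrable e P) (hem : StronglyMeasurable[m₁] e)
    (hindep : Indep m₁ (MeasurableSpace.comap V inferInstance) P)
    {h : Ω → ℝ} (hh : StronglyMeasurable[MeasurableSpace.comap V inferInstance] h)
    (hhint : Integrable h P) :
    P[fun ω => h ω + e ω | MeasurableSpace.comap V inferInstance]
      =ᵐ[P] fun ω => h ω + ∫ ω', e ω' ∂P := by
  have hle := hV.comap_le
  have h1 : P[fun ω => h ω + e ω | MeasurableSpace.comap V inferInstance]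
      =ᵐ[P] P[h | MeasurableSpace.comap V inferInstance]
        + P[e | MeasurableSpace.comap V inferInstance] := condExp_add hhint he _
  have h2 : P[h | MeasurableSpace.comap V inferInstance] = h :=
    condExp_of_stronglyMeasurable hle hh hhint
  have h3 : P[e | MeasurableSpace.comap V inferInstance] =ᵐ[P] fun _ => ∫ ω', e ω' ∂P :=
    condExp_indep_eq hm₁ hle hem hindep
  refine h1.trans ?_
  filter_upwards [h3] with ω hω
  simp [h2, hω]


lemma comap_le_comap_of_comp {Ω α β : Type*} [MeasurableSpace α] [MeasurableSpace β]
    {V : Ω → β} {T : Ω → α} (Φ : α → β) (hΦ : Measurable Φ) (hV : ∀ ω, V ω = Φ (T ω)) :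
    MeasurableSpace.comap V ‹_› ≤ MeasurableSpace.comap T ‹_› := by
  rintro s ⟨A, hA, rfl⟩
  exact ⟨Φ ⁻¹' A, hΦ hA, by ext ω; simp [hV]⟩


/-- **SCM 2 implies the identification assumptions**: with
`G = φ_G(X,ε_G) ∈ {0,1}`, `M(g) = m₀(X,g,U) + ε_M`, `Y0(g) = f₀(X) + U + ε₀` and
`Y1(g,m) = f₁(X,g,m) + U + ε₁`, where `ε_G` is independent of `(X,U,ε_M,ε₀,ε₁)` and
`(ε₀,ε₁)` is independent of `(X,U,ε_G,ε_M)`: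
(a) for each `g ∈ {0,1}`, `G` and `M(g)` are conditionally independent given `X`
    (first part of sequential ignorability);
(b) `E[Y1(0,M(0)) − Y0(0) | σ(M(0),G,X)] = f₁(X,0,M(0)) − f₀(X) + E[ε₁−ε₀]` a.s., which is
    `σ(M(0),X)`-measurable, so Assumption 2 (parallel trends) holds; and
(c) for every `m`, `E[Y1(0,m) − Y0(0) | σ(M(1),G,X)] = f₁(X,0,m) − f₀(X) + E[ε₁−ε₀]` a.s.,
    which is `σ(X)`-measurable, so Assumption 3(ii) holds. -/
theorem scm2_identification_assumptions
    {Ω 𝓧 𝓔 : Type*} [MeasurableSpace Ω] [StandardBorelSpace Ω] [Nonempty Ω]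
    [MeasurableSpace 𝓧] [MeasurableSpace 𝓔]
    (P : Measure Ω) [IsProbabilityMeasure P]
    (X : Ω → 𝓧) (U : Ω → ℝ) (εG : Ω → 𝓔) (εM ε0 ε1 : Ω → ℝ)
    (hXmeas : Measurable X) (hUmeas : Measurable U) (hεGmeas : Measurable εG)
    (hεMmeas : Measurable εM) (hε0meas : Measurable ε0) (hε1meas : Measurable ε1)
    (hε0int : Integrable ε0 P) (hε1int : Integrable ε1 P)
    -- ε_G is independent of (X, U, ε_M, ε₀, ε₁)
    (hindepG : IndepFun εG (fun ω => (X ω, U ω, εM ω, ε0 ω, ε1 ω)) P)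
    -- (ε₀, ε₁) is independent of (X, U, ε_G, ε_M)
    (hindep01 : IndepFun (fun ω => (ε0 ω, ε1 ω)) (fun ω => (X ω, U ω, εG ω, εM ω)) P)
    -- structural functions
    (φG : 𝓧 × 𝓔 → ℝ) (hφGmeas : Measurable φG) (hφG01 : ∀ y, φG y = 0 ∨ φG y = 1)
    (m₀ : 𝓧 × ℝ × ℝ → ℝ) (hm₀meas : Measurable m₀)
    (f₀ : 𝓧 → ℝ) (hf₀meas : Measurable f₀)
    (f₁ : 𝓧 × ℝ × ℝ → ℝ) (hf₁meas : Measurable f₁)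
    -- integrability
    (hf₀int : Integrable (fun ω => f₀ (X ω)) P)
    (hf₁M0int : Integrable (fun ω => f₁ (X ω, 0, m₀ (X ω, 0, U ω) + εM ω)) P)
    (hf₁mint : ∀ m : ℝ, Integrable (fun ω => f₁ (X ω, 0, m)) P)
    -- the structural model: G, M(g), Y0(g), Y1(g,m)
    (G : Ω → ℝ) (hG : G = fun ω => φG (X ω, εG ω))
    (M' : ℝ → Ω → ℝ) (hM' : ∀ g, M' g = fun ω => m₀ (X ω, g, U ω) + εM ω)
    (Y0 : ℝ → Ω → ℝ) (hY0 : ∀ g ∈ ({0, 1} : Set ℝ), Y0 g = fun ω => f₀ (X ω) + U ω + ε0 ω)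
    (Y1 : ℝ → ℝ → Ω → ℝ)
    (hY1 : ∀ g ∈ ({0, 1} : Set ℝ), ∀ m : ℝ, Y1 g m = fun ω => f₁ (X ω, g, m) + U ω + ε1 ω) :
    -- (a) first part of sequential ignorability: G ⟂ M(g) ∣ X
    (∀ g ∈ ({0, 1} : Set ℝ),
      CondIndepFun (MeasurableSpace.comap X inferInstance) hXmeas.comap_le G (M' g) P) ∧
    -- (b) the conditional expectation formula and Assumption 2 (parallel trends)
    (P[fun ω => Y1 0 (M' 0 ω) ω - Y0 0 ω |
        MeasurableSpace.comap (fun ω => (M' 0 ω, G ω, X ω)) inferInstance]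
      =ᵐ[P] fun ω => f₁ (X ω, 0, M' 0 ω) - f₀ (X ω) + ∫ ω', (ε1 ω' - ε0 ω') ∂P) ∧
    (P[fun ω => Y1 0 (M' 0 ω) ω - Y0 0 ω |
        MeasurableSpace.comap (fun ω => (M' 0 ω, G ω, X ω)) inferInstance]
      =ᵐ[P] P[fun ω => Y1 0 (M' 0 ω) ω - Y0 0 ω |
        MeasurableSpace.comap (fun ω => (M' 0 ω, X ω)) inferInstance]) ∧
    -- (c) Assumption 3(ii): for every m the conditional expectation given σ(M(1),G,X)
    -- equals a σ(X)-measurable function of the covariates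
    (∀ m : ℝ,
      P[fun ω => Y1 0 m ω - Y0 0 ω |
          MeasurableSpace.comap (fun ω => (M' 1 ω, G ω, X ω)) inferInstance]
        =ᵐ[P] fun ω => f₁ (X ω, 0, m) - f₀ (X ω) + ∫ ω', (ε1 ω' - ε0 ω') ∂P) := by
  have mem0 : (0:ℝ) ∈ ({0, 1} : Set ℝ) := Set.mem_insert _ _
  have hTmeas : Measurable (fun ω => (X ω, U ω, εG ω, εM ω)) :=
    hXmeas.prodMk (hUmeas.prodMk (hεGmeas.prodMk hεMmeas))
  have hGmeas : Measurable G := by rw [hG]; exact hφGmeas.comp (hXmeas.prodMk hεGmeas)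
  have hMmeas : ∀ g : ℝ, Measurable (M' g) := by
    intro g
    rw [hM']
    exact (hm₀meas.comp (hXmeas.prodMk (measurable_const.prodMk hUmeas))).add hεMmeas
  -- the noise e = ε1 - ε0
  have he_int : Integrable (fun ω => ε1 ω - ε0 ω) P := hε1int.sub hε0int
  have hem : StronglyMeasurable[MeasurableSpace.comap (fun ω => (ε0 ω, ε1 ω)) inferInstance]
      (fun ω => ε1 ω - ε0 ω) := by
    have hpm : Measurable[MeasurableSpace.comap (fun ω => (ε0 ω, ε1 ω)) inferInstance]
        (fun ω => (ε0 ω, ε1 ω)) := Measurable.of_comap_le le_rfl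
    exact ((measurable_snd.sub measurable_fst).comp hpm).stronglyMeasurable
  have hm₁le : MeasurableSpace.comap (fun ω => (ε0 ω, ε1 ω)) inferInstance
      ≤ ‹MeasurableSpace Ω› := (hε0meas.prodMk hε1meas).comap_le
  have hbig : Indep (MeasurableSpace.comap (fun ω => (ε0 ω, ε1 ω)) inferInstance)
      (MeasurableSpace.comap (fun ω => (X ω, U ω, εG ω, εM ω)) inferInstance) P :=
    (IndepFun_iff_Indep _ _ _).mp hindep01
  -- the integrand in (b)
  have hYdiff : (fun ω => Y1 0 (M' 0 ω) ω - Y0 0 ω)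
      = fun ω => (f₁ (X ω, 0, M' 0 ω) - f₀ (X ω)) + (ε1 ω - ε0 ω) := by
    funext ω
    rw [hY1 0 mem0 (M' 0 ω), hY0 0 mem0]
    ring
  have hhint : Integrable (fun ω => f₁ (X ω, 0, M' 0 ω) - f₀ (X ω)) P := by
    have h1 : (fun ω => f₁ (X ω, 0, M' 0 ω)) =
        fun ω => f₁ (X ω, 0, m₀ (X ω, 0, U ω) + εM ω) := by
      funext ω; rw [hM']
    exact (h1 ▸ hf₁M0int).sub hf₀int
  -- part (b1)
  have hb1 : P[fun ω => Y1 0 (M' 0 ω) ω - Y0 0 ω |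
        MeasurableSpace.comap (fun ω => (M' 0 ω, G ω, X ω)) inferInstance]
      =ᵐ[P] fun ω => f₁ (X ω, 0, M' 0 ω) - f₀ (X ω) + ∫ ω', (ε1 ω' - ε0 ω') ∂P := by
    have hVmeas : Measurable (fun ω => (M' 0 ω, G ω, X ω)) :=
      (hMmeas 0).prodMk (hGmeas.prodMk hXmeas)
    have hΦmeas : Measurable (fun q : 𝓧 × ℝ × 𝓔 × ℝ =>
        ((m₀ (q.1, 0, q.2.1) + q.2.2.2, φG (q.1, q.2.2.1), q.1) : ℝ × ℝ × 𝓧)) := by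
      refine Measurable.prodMk ?_ (Measurable.prodMk ?_ measurable_fst)
      · exact (hm₀meas.comp (measurable_fst.prodMk (measurable_const.prodMk
          (measurable_fst.comp measurable_snd)))).add
          (measurable_snd.comp (measurable_snd.comp measurable_snd))
      · exact hφGmeas.comp (measurable_fst.prodMk
          (measurable_fst.comp (measurable_snd.comp measurable_snd)))
    have hVT : ∀ ω, (M' 0 ω, G ω, X ω) =
        (fun q : 𝓧 × ℝ × 𝓔 × ℝ => ((m₀ (q.1, 0, q.2.1) + q.2.2.2, φG (q.1, q.2.2.1), q.1) :
          ℝ × ℝ × 𝓧)) ((X ω, U ω, εG ω, εM ω)) := by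
      intro ω; simp only [hG, hM']
    have hVle := comap_le_comap_of_comp (V := fun ω => (M' 0 ω, G ω, X ω))
      (T := fun ω => (X ω, U ω, εG ω, εM ω)) _ hΦmeas hVT
    have hindepV := indep_of_indep_of_le_right hbig hVle
    have hh : StronglyMeasurable[MeasurableSpace.comap
        (fun ω => (M' 0 ω, G ω, X ω)) inferInstance]
        (fun ω => f₁ (X ω, 0, M' 0 ω) - f₀ (X ω)) := by
      have hVm : Measurable[MeasurableSpace.comap (fun ω => (M' 0 ω, G ω, X ω)) inferInstance]
          (fun ω => (M' 0 ω, G ω, X ω)) := Measurable.of_comap_le le_rfl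
      have hΨ : Measurable (fun p : ℝ × ℝ × 𝓧 => f₁ (p.2.2, 0, p.1) - f₀ p.2.2) := by
        exact (hf₁meas.comp ((measurable_snd.comp measurable_snd).prodMk
          (measurable_const.prodMk measurable_fst))).sub
          (hf₀meas.comp (measurable_snd.comp measurable_snd))
      exact ((hΨ.comp hVm)).stronglyMeasurable
    rw [hYdiff]
    exact condexp_structural P hVmeas hm₁le he_int hem hindepV hh hhint
  have hb2 : P[fun ω => Y1 0 (M' 0 ω) ω - Y0 0 ω |
        MeasurableSpace.comap (fun ω => (M' 0 ω, X ω)) inferInstance]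
      =ᵐ[P] fun ω => f₁ (X ω, 0, M' 0 ω) - f₀ (X ω) + ∫ ω', (ε1 ω' - ε0 ω') ∂P := by
    have hVmeas : Measurable (fun ω => (M' 0 ω, X ω)) := (hMmeas 0).prodMk hXmeas
    have hΦmeas : Measurable (fun q : 𝓧 × ℝ × 𝓔 × ℝ =>
        ((m₀ (q.1, 0, q.2.1) + q.2.2.2, q.1) : ℝ × 𝓧)) := by
      exact Measurable.prodMk ((hm₀meas.comp (measurable_fst.prodMk
        (measurable_const.prodMk (measurable_fst.comp measurable_snd)))).add
        (measurable_snd.comp (measurable_snd.comp measurable_snd))) measurable_fst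
    have hVT : ∀ ω, (M' 0 ω, X ω) =
        (fun q : 𝓧 × ℝ × 𝓔 × ℝ => ((m₀ (q.1, 0, q.2.1) + q.2.2.2, q.1) : ℝ × 𝓧))
          ((X ω, U ω, εG ω, εM ω)) := by
      intro ω; simp only [hM']
    have hVle := comap_le_comap_of_comp (V := fun ω => (M' 0 ω, X ω))
      (T := fun ω => (X ω, U ω, εG ω, εM ω)) _ hΦmeas hVT
    have hindepV := indep_of_indep_of_le_right hbig hVle
    have hh : StronglyMeasurable[MeasurableSpace.comap (fun ω => (M' 0 ω, X ω)) inferInstance]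
        (fun ω => f₁ (X ω, 0, M' 0 ω) - f₀ (X ω)) := by
      have hVm : Measurable[MeasurableSpace.comap (fun ω => (M' 0 ω, X ω)) inferInstance]
          (fun ω => (M' 0 ω, X ω)) := Measurable.of_comap_le le_rfl
      have hΨ : Measurable (fun p : ℝ × 𝓧 => f₁ (p.2, 0, p.1) - f₀ p.2) :=
        (hf₁meas.comp (measurable_snd.prodMk
          (measurable_const.prodMk measurable_fst))).sub (hf₀meas.comp measurable_snd)
      exact ((hΨ.comp hVm)).stronglyMeasurable
    rw [hYdiff]
    exact condexp_structural P hVmeas hm₁le he_int hem hindepV hh hhint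
  refine ⟨?_, hb1, hb1.trans hb2.symm, ?_⟩
  · -- part (a)
    intro g _
    have hξmeas : Measurable (fun z : 𝓧 × ℝ × ℝ => m₀ (z.1, g, z.2.1) + z.2.2) :=
      (hm₀meas.comp (measurable_fst.prodMk (measurable_const.prodMk
        (measurable_fst.comp measurable_snd)))).add (measurable_snd.comp measurable_snd)
    refine condIndep_helper P hXmeas (hXmeas.prodMk (hUmeas.prodMk hεMmeas)) hεGmeas
      ?_ Prod.fst measurable_fst (fun ω => rfl) hGmeas (hMmeas g)
      φG hφGmeas (fun ω => by rw [hG]) (fun z : 𝓧 × ℝ × ℝ => m₀ (z.1, g, z.2.1) + z.2.2)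
      hξmeas (fun ω => by rw [hM'])
    · -- IndepFun εG (X, U, εM)
      have hψ : Measurable (fun p : 𝓧 × ℝ × ℝ × ℝ × ℝ => ((p.1, p.2.1, p.2.2.1) : 𝓧 × ℝ × ℝ)) :=
        measurable_fst.prodMk ((measurable_fst.comp measurable_snd).prodMk
          (measurable_fst.comp (measurable_snd.comp measurable_snd)))
      exact hindepG.comp measurable_id hψ
  · -- part (c)
    intro m
    have hYdiffm : (fun ω => Y1 0 m ω - Y0 0 ω)
        = fun ω => (f₁ (X ω, 0, m) - f₀ (X ω)) + (ε1 ω - ε0 ω) := by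
      funext ω
      rw [hY1 0 mem0 m, hY0 0 mem0]
      ring
    have hVmeas : Measurable (fun ω => (M' 1 ω, G ω, X ω)) :=
      (hMmeas 1).prodMk (hGmeas.prodMk hXmeas)
    have hΦmeas : Measurable (fun q : 𝓧 × ℝ × 𝓔 × ℝ =>
        ((m₀ (q.1, 1, q.2.1) + q.2.2.2, φG (q.1, q.2.2.1), q.1) : ℝ × ℝ × 𝓧)) := by
      refine Measurable.prodMk ?_ (Measurable.prodMk ?_ measurable_fst)
      · exact (hm₀meas.comp (measurable_fst.prodMk (measurable_const.prodMk
          (measurable_fst.comp measurable_snd)))).add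
          (measurable_snd.comp (measurable_snd.comp measurable_snd))
      · exact hφGmeas.comp (measurable_fst.prodMk
          (measurable_fst.comp (measurable_snd.comp measurable_snd)))
    have hVT : ∀ ω, (M' 1 ω, G ω, X ω) =
        (fun q : 𝓧 × ℝ × 𝓔 × ℝ => ((m₀ (q.1, 1, q.2.1) + q.2.2.2, φG (q.1, q.2.2.1), q.1) :
          ℝ × ℝ × 𝓧)) ((X ω, U ω, εG ω, εM ω)) := by
      intro ω; simp only [hG, hM']
    have hVle := comap_le_comap_of_comp (V := fun ω => (M' 1 ω, G ω, X ω))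
      (T := fun ω => (X ω, U ω, εG ω, εM ω)) _ hΦmeas hVT
    have hindepV := indep_of_indep_of_le_right hbig hVle
    have hh : StronglyMeasurable[MeasurableSpace.comap
        (fun ω => (M' 1 ω, G ω, X ω)) inferInstance]
        (fun ω => f₁ (X ω, 0, m) - f₀ (X ω)) := by
      have hVm : Measurable[MeasurableSpace.comap (fun ω => (M' 1 ω, G ω, X ω)) inferInstance]
          (fun ω => (M' 1 ω, G ω, X ω)) := Measurable.of_comap_le le_rfl
      have hΨ : Measurable (fun p : ℝ × ℝ × 𝓧 => f₁ (p.2.2, 0, m) - f₀ p.2.2) :=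
        (hf₁meas.comp ((measurable_snd.comp measurable_snd).prodMk
          (measurable_const.prodMk measurable_const))).sub
          (hf₀meas.comp (measurable_snd.comp measurable_snd))
      exact ((hΨ.comp hVm)).stronglyMeasurable
    have hhintm : Integrable (fun ω => f₁ (X ω, 0, m) - f₀ (X ω)) P := (hf₁mint m).sub hf₀int
    rw [hYdiffm]
    exact condexp_structural P hVmeas hm₁le he_int hem hindepV hh hhintm
end
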